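/- arXiv:2601.17560 — 7 statements merged into one kernel-verified Lean document; each statement's English description precedes it below -/
import Mathlib

section
/- Let r > 1 and let T be an invertible bounded linear operator on a complex Hilbert space H with ‖T‖ ≤ r and ‖T⁻¹‖ ≤ r. Let P = (T*T)^{1/2} be the positive square root of T*T and let D = β_r(T)^{1/2} be the positive square root of β_r(T) = (r² + r⁻²)·I − T*T − (T*T)⁻¹ (which is a positive operator). Define the operator T̂ on H ⊕ H by T̂(x, y) = (T x + T P⁻¹ D y, (T*)⁻¹ y). Then: (i) T̂ is invertible with T̂⁻¹(x, y) = (T⁻¹ x − D P⁻¹ T* y, T* y); (ii) β_r(T̂) = (r² + r⁻²)·I − T̂*T̂ − (T̂*T̂)⁻¹ = 0, i.e. T̂ is a quantum annulus unitary; and (iii) for every integer n ∈ ℤ, T̂ⁿ(x, 0) = (Tⁿ x, 0), so that T̂ is an extension (and hence a dilation) of T: Tⁿ = P_H T̂ⁿ|_H for all n ∈ ℤ. -/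
/-!
`T̂` and `T̂inv` are the images of explicit `2 × 2` matrices over `B(H)` under the block-operator
`⋆`-homomorphism `Matrix (Fin 2) (Fin 2) B(H) → B(H ⊕₂ H)`, so (i) and (ii) are identities between
`2 × 2` matrices over `B(H)`. The products in (i) reduce to `1` once `D` commutes with `P⁻¹`.
In (ii), `P² = T*T` and `D P = P D` make the off-diagonal entries of `T̂* T̂ + T̂inv T̂inv*`
cancel, and both diagonal entries are `T*T + (T*T)⁻¹ + D² = (r² + r⁻²) I`. For (iii), `T̂` is
upper triangular with corner `T`, so it preserves `H ⊕ 0` and acts there as `T`; so do all its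
integer powers.
-/

lemma Matrix.star_fin_two_of {R : Type*} [Star R] (a b c d : R) :
    star !![a, b; c, d] = !![star a, star c; star b, star d] := by
  ext i j; fin_cases i <;> fin_cases j <;> rfl

lemma zpow_smul_eq_of_smul_eq {G K α β : Type*} [Group G] [Group K] [MulAction G α]
    [MulAction K β] {g : G} {k : K} {f : β → α} (h : ∀ x, g • f x = f (k • x)) (n : ℤ) (x : β) :
    g ^ n • f x = f (k ^ n • x) := by
  have h_inv (x : β) : g⁻¹ • f x = f (k⁻¹ • x) := by rw [inv_smul_eq_iff, h, smul_inv_smul]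
  induction n using Int.induction_on generalizing x with
  | zero => simp
  | succ n ih => rw [zpow_add_one, zpow_add_one, mul_smul, mul_smul, h, ih]
  | pred n ih => rw [zpow_sub_one, zpow_sub_one, mul_smul, mul_smul, h_inv, ih]

lemma Commute.of_mul_self_left {A : Type*} [CStarAlgebra A] [PartialOrder A] [StarOrderedRing A]
    {a b : A} (ha : 0 ≤ a) (h : Commute (a * a) b) : Commute a b := by
  rw [← CFC.sqrt_mul_self a ha, CFC.sqrt_eq_cfc]
  exact h.cfc_nnreal _

lemma Units.commute_star_mul_self_inv {R : Type*} [Monoid R] [StarMul R] (t : Rˣ) :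
    Commute (star ↑t * ↑t : R) (↑t⁻¹ * star ↑t⁻¹) := by
  have : (↑t⁻¹ * star ↑t⁻¹ : R) = ↑(star t * t)⁻¹ := by simp [mul_inv_rev, Units.coe_star_inv]
  rw [this]
  exact Units.commute_coe_inv (star t * t)

section BlockOperator

open ContinuousLinearMap

variable {𝕜 H : Type*} [RCLike 𝕜] [NormedAddCommGroup H] [InnerProductSpace 𝕜 H]

noncomputable def blockOp (M : Matrix (Fin 2) (Fin 2) (H →L[𝕜] H)) :
    WithLp 2 (H × H) →L[𝕜] WithLp 2 (H × H) :=
  (WithLp.prodContinuousLinearEquiv 2 𝕜 H H).symm.toContinuousLinearMap ∘L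
    ((M 0 0 ∘L fst 𝕜 H H + M 0 1 ∘L snd 𝕜 H H).prod (M 1 0 ∘L fst 𝕜 H H + M 1 1 ∘L snd 𝕜 H H)) ∘L
    (WithLp.prodContinuousLinearEquiv 2 𝕜 H H).toContinuousLinearMap

@[simp]
lemma blockOp_toLp (M : Matrix (Fin 2) (Fin 2) (H →L[𝕜] H)) (x y : H) :
    blockOp M (WithLp.toLp 2 (x, y)) = WithLp.toLp 2 (M 0 0 x + M 0 1 y, M 1 0 x + M 1 1 y) :=
  rfl

lemma ContinuousLinearMap.ext_withLp_prod {f g : WithLp 2 (H × H) →L[𝕜] WithLp 2 (H × H)}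
    (h : ∀ x y, f (WithLp.toLp 2 (x, y)) = g (WithLp.toLp 2 (x, y))) : f = g :=
  ext fun v => h v.ofLp.1 v.ofLp.2

variable [CompleteSpace H]

noncomputable def blockOpStarAlgHom :
    Matrix (Fin 2) (Fin 2) (H →L[𝕜] H) →⋆ₐ[𝕜] (WithLp 2 (H × H) →L[𝕜] WithLp 2 (H × H)) where
  toFun := blockOp
  map_one' := ContinuousLinearMap.ext_withLp_prod fun x y => by simp
  map_mul' M N := ContinuousLinearMap.ext_withLp_prod fun x y => by
    simp [Matrix.mul_apply, Fin.sum_univ_two, add_comm, add_left_comm]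
  map_zero' := ContinuousLinearMap.ext_withLp_prod fun x y => by simp
  map_add' M N := ContinuousLinearMap.ext_withLp_prod fun x y => by
    simp [← WithLp.toLp_add, add_comm, add_left_comm]
  commutes' c := ContinuousLinearMap.ext_withLp_prod fun x y => by
    simp [Matrix.algebraMap_matrix_apply, ← WithLp.toLp_smul]
  map_star' M := by
    rw [star_eq_adjoint, eq_adjoint_iff]
    rintro ⟨x₁, y₁⟩ ⟨x₂, y₂⟩
    simp only [blockOp_toLp, Matrix.star_apply, star_eq_adjoint, WithLp.prod_inner_apply,
      inner_add_left, inner_add_right, adjoint_inner_left]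
    ring

@[simp]
lemma blockOpStarAlgHom_apply (M : Matrix (Fin 2) (Fin 2) (H →L[𝕜] H)) :
    blockOpStarAlgHom M = blockOp M :=
  rfl

end BlockOperator

section Dilation

open Matrix

variable {R : Type*} [Ring R] [StarRing R]

def dilationMatrix (t P : Rˣ) (D : R) : Matrix (Fin 2) (Fin 2) R :=
  !![↑t, ↑t * ↑P⁻¹ * D; 0, star ↑t⁻¹]

def dilationInvMatrix (t P : Rˣ) (D : R) : Matrix (Fin 2) (Fin 2) R :=
  !![↑t⁻¹, -(D * ↑P⁻¹ * star ↑t); 0, star ↑t]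

variable {t P : Rˣ} {D : R}

lemma dilationMatrix_mul_dilationInvMatrix (hDP : Commute D P) :
    dilationMatrix t P D * dilationInvMatrix t P D = 1 := by
  have hDP_inv := hDP.units_inv_right
  rw [dilationMatrix, dilationInvMatrix, mul_fin_two, one_fin_two]
  simp [← star_mul, mul_assoc, hDP_inv.eq]

lemma dilationInvMatrix_mul_dilationMatrix (hDP : Commute D P) :
    dilationInvMatrix t P D * dilationMatrix t P D = 1 := by
  have hDP_inv := hDP.units_inv_right
  rw [dilationMatrix, dilationInvMatrix, mul_fin_two, one_fin_two]
  simp [← star_mul, mul_assoc, hDP_inv.eq]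

lemma star_dilationMatrix_mul_add {𝕜 : Type*} [CommSemiring 𝕜] [Algebra 𝕜 R] {c : 𝕜}
    (hP : IsSelfAdjoint (P : R)) (hD : IsSelfAdjoint D) (hP2 : (P : R) * P = star ↑t * t)
    (hDP : Commute D P) (hD2 : D * D = c • 1 - star ↑t * ↑t - ↑t⁻¹ * star ↑t⁻¹) :
    star (dilationMatrix t P D) * dilationMatrix t P D +
        dilationInvMatrix t P D * star (dilationInvMatrix t P D) = c • 1 := by
  have hsum : star ↑t * ↑t + ↑t⁻¹ * star ↑t⁻¹ + D * D = c • 1 := by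
    rw [hD2]; abel
  have hP_inv : star (↑P⁻¹ : R) = ↑P⁻¹ := by
    rw [← Units.coe_star_inv, Units.ext (u := star P) (v := P) hP]
  have hP2' (X : R) : star ↑t * (↑t * X) = P * (P * X) := by rw [← mul_assoc, ← hP2, mul_assoc]
  rw [dilationMatrix, dilationInvMatrix, star_fin_two_of, star_fin_two_of, mul_fin_two, mul_fin_two,
    one_fin_two]
  simp [hP_inv, hD.star_eq, mul_assoc, hP2', ← hP2, hDP.eq, ← hsum, add_comm, add_left_comm]

end Dilation

open ContinuousLinearMap in
theorem quantum_annulus_explicit_dilation_general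
    {H : Type*} [NormedAddCommGroup H] [InnerProductSpace ℂ H] [CompleteSpace H]
    (r : ℝ) (T : (H →L[ℂ] H)ˣ)
    (P Pinv D : H →L[ℂ] H)
    (hP : 0 ≤ P) (hP2 : P * P = adjoint (T : H →L[ℂ] H) * (T : H →L[ℂ] H))
    (hPinv : P * Pinv = 1) (hPinv' : Pinv * P = 1)
    (hD : 0 ≤ D)
    (hD2 : D * D = ((r ^ 2 + r⁻¹ ^ 2 : ℝ) : ℂ) • (1 : H →L[ℂ] H)
      - adjoint (T : H →L[ℂ] H) * (T : H →L[ℂ] H)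
      - ((T⁻¹ : (H →L[ℂ] H)ˣ) : H →L[ℂ] H) *
          adjoint ((T⁻¹ : (H →L[ℂ] H)ˣ) : H →L[ℂ] H))
    (That Thatinv : WithLp 2 (H × H) →L[ℂ] WithLp 2 (H × H))
    (hThat : ∀ x y : H,
      That ((WithLp.equiv 2 (H × H)).symm (x, y)) =
        (WithLp.equiv 2 (H × H)).symm
          ((T : H →L[ℂ] H) x + ((T : H →L[ℂ] H) * Pinv * D) y,
            adjoint ((T⁻¹ : (H →L[ℂ] H)ˣ) : H →L[ℂ] H) y))
    (hThatinv : ∀ x y : H,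
      Thatinv ((WithLp.equiv 2 (H × H)).symm (x, y)) =
        (WithLp.equiv 2 (H × H)).symm
          (((T⁻¹ : (H →L[ℂ] H)ˣ) : H →L[ℂ] H) x
              - (D * Pinv * adjoint (T : H →L[ℂ] H)) y,
            adjoint (T : H →L[ℂ] H) y)) :
    -- (i) `T̂` is invertible with inverse `T̂inv`
    That * Thatinv = 1 ∧ Thatinv * That = 1 ∧
    -- (ii) `β_r(T̂) = 0`: `T̂` is a quantum annulus unitary
    ((r ^ 2 + r⁻¹ ^ 2 : ℝ) : ℂ) • (1 : WithLp 2 (H × H) →L[ℂ] WithLp 2 (H × H))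
        - adjoint That * That - Thatinv * adjoint Thatinv = 0 ∧
    -- (iii) `T̂ⁿ (x,0) = (Tⁿ x, 0)` for all `n : ℤ`
    ∃ U : (WithLp 2 (H × H) →L[ℂ] WithLp 2 (H × H))ˣ,
      (U : WithLp 2 (H × H) →L[ℂ] WithLp 2 (H × H)) = That ∧
      ∀ (n : ℤ) (x : H),
        ((U ^ n : (WithLp 2 (H × H) →L[ℂ] WithLp 2 (H × H))ˣ) :
            WithLp 2 (H × H) →L[ℂ] WithLp 2 (H × H))
          ((WithLp.equiv 2 (H × H)).symm (x, 0)) =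
        (WithLp.equiv 2 (H × H)).symm (((T ^ n : (H →L[ℂ] H)ˣ) : H →L[ℂ] H) x, 0) := by
  simp only [← star_eq_adjoint, WithLp.equiv_symm_apply] at *
  let P' : (H →L[ℂ] H)ˣ := ⟨P, Pinv, hPinv, hPinv'⟩
  -- `D * D` is a function of `P * P = T* T`; taking square roots twice gives `Commute D P`.
  have hDP : Commute D P := by
    have hPD : Commute (P * P) (D * D) := by
      rw [hD2, hP2]
      exact (((Commute.one_right _).smul_right _).sub_right (Commute.refl _)).sub_right
        T.commute_star_mul_self_inv
    exact (Commute.of_mul_self_left hP (Commute.of_mul_self_left hD hPD.symm).symm).symm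
  have hThat_eq : That = blockOpStarAlgHom (dilationMatrix T P' D) :=
    ContinuousLinearMap.ext_withLp_prod fun x y => by simpa [dilationMatrix, P'] using hThat x y
  have hThatinv_eq : Thatinv = blockOpStarAlgHom (dilationInvMatrix T P' D) :=
    ContinuousLinearMap.ext_withLp_prod fun x y => by
      simpa [dilationInvMatrix, P', sub_eq_add_neg] using hThatinv x y
  have h_mul_inv : That * Thatinv = 1 := by
    rw [hThat_eq, hThatinv_eq, ← map_mul, dilationMatrix_mul_dilationInvMatrix hDP, map_one]
  have h_inv_mul : Thatinv * That = 1 := by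
    rw [hThat_eq, hThatinv_eq, ← map_mul, dilationInvMatrix_mul_dilationMatrix hDP, map_one]
  refine ⟨h_mul_inv, h_inv_mul, ?_, ⟨That, Thatinv, h_mul_inv, h_inv_mul⟩, rfl, fun n x => ?_⟩
  · rw [sub_sub, sub_eq_zero, hThat_eq, hThatinv_eq, ← map_star, ← map_star, ← map_mul, ← map_mul,
      ← map_add, star_dilationMatrix_mul_add (P := P') hP.isSelfAdjoint hD.isSelfAdjoint hP2 hDP
      hD2, map_smul, map_one]
  · have hThat_inl (x : H) :
        That (WithLp.toLp 2 (x, 0)) = WithLp.toLp 2 ((T : H →L[ℂ] H) x, 0) := by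
      simpa using hThat x 0
    exact zpow_smul_eq_of_smul_eq (k := T)
      (g := (⟨That, Thatinv, h_mul_inv, h_inv_mul⟩ : (WithLp 2 (H × H) →L[ℂ] WithLp 2 (H × H))ˣ))
      (f := fun x : H => WithLp.toLp 2 (x, (0 : H))) hThat_inl n x

open ContinuousLinearMap in
/-- Let `r > 1` and let `T` be an invertible bounded operator on a complex
Hilbert space `H` with `‖T‖ ≤ r`, `‖T⁻¹‖ ≤ r`.  Let `P = (T*T)^{1/2}` (with inverse `Pinv`)
and let `D = β_r(T)^{1/2}`, where `β_r(T) = (r² + r⁻²)·I − T*T − (T*T)⁻¹` (note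
`(T*T)⁻¹ = T⁻¹ · (T⁻¹)*`).  Let `T̂` be the operator on `H ⊕₂ H` given by
`T̂(x, y) = (T x + T P⁻¹ D y, (T*)⁻¹ y)`, and `T̂inv` the operator
`(x, y) ↦ (T⁻¹ x − D P⁻¹ T* y, T* y)`.  Then (i) `T̂` is invertible with inverse `T̂inv`;
(ii) `β_r(T̂) = 0`, i.e. `T̂` is a quantum annulus unitary; and (iii) for every `n : ℤ`,
`T̂ⁿ (x, 0) = (Tⁿ x, 0)`, so `T̂` is an extension (hence a dilation) of `T`. -/
theorem quantum_annulus_explicit_dilation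
    {H : Type*} [NormedAddCommGroup H] [InnerProductSpace ℂ H] [CompleteSpace H]
    (r : ℝ) (hr : 1 < r) (T : (H →L[ℂ] H)ˣ)
    (hT : ‖(T : H →L[ℂ] H)‖ ≤ r)
    (hTinv : ‖((T⁻¹ : (H →L[ℂ] H)ˣ) : H →L[ℂ] H)‖ ≤ r)
    (P Pinv D : H →L[ℂ] H)
    (hP : 0 ≤ P) (hP2 : P * P = adjoint (T : H →L[ℂ] H) * (T : H →L[ℂ] H))
    (hPinv : P * Pinv = 1) (hPinv' : Pinv * P = 1)
    (hD : 0 ≤ D)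
    (hD2 : D * D = ((r ^ 2 + r⁻¹ ^ 2 : ℝ) : ℂ) • (1 : H →L[ℂ] H)
      - adjoint (T : H →L[ℂ] H) * (T : H →L[ℂ] H)
      - ((T⁻¹ : (H →L[ℂ] H)ˣ) : H →L[ℂ] H) *
          adjoint ((T⁻¹ : (H →L[ℂ] H)ˣ) : H →L[ℂ] H))
    (That Thatinv : WithLp 2 (H × H) →L[ℂ] WithLp 2 (H × H))
    (hThat : ∀ x y : H,
      That ((WithLp.equiv 2 (H × H)).symm (x, y)) =
        (WithLp.equiv 2 (H × H)).symm
          ((T : H →L[ℂ] H) x + ((T : H →L[ℂ] H) * Pinv * D) y,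
            adjoint ((T⁻¹ : (H →L[ℂ] H)ˣ) : H →L[ℂ] H) y))
    (hThatinv : ∀ x y : H,
      Thatinv ((WithLp.equiv 2 (H × H)).symm (x, y)) =
        (WithLp.equiv 2 (H × H)).symm
          (((T⁻¹ : (H →L[ℂ] H)ˣ) : H →L[ℂ] H) x
              - (D * Pinv * adjoint (T : H →L[ℂ] H)) y,
            adjoint (T : H →L[ℂ] H) y)) :
    -- (i) `T̂` is invertible with inverse `T̂inv`
    That * Thatinv = 1 ∧ Thatinv * That = 1 ∧
    -- (ii) `β_r(T̂) = 0`: `T̂` is a quantum annulus unitary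
    ((r ^ 2 + r⁻¹ ^ 2 : ℝ) : ℂ) • (1 : WithLp 2 (H × H) →L[ℂ] WithLp 2 (H × H))
        - adjoint That * That - Thatinv * adjoint Thatinv = 0 ∧
    -- (iii) `T̂ⁿ (x,0) = (Tⁿ x, 0)` for all `n : ℤ`
    ∃ U : (WithLp 2 (H × H) →L[ℂ] WithLp 2 (H × H))ˣ,
      (U : WithLp 2 (H × H) →L[ℂ] WithLp 2 (H × H)) = That ∧
      ∀ (n : ℤ) (x : H),
        ((U ^ n : (WithLp 2 (H × H) →L[ℂ] WithLp 2 (H × H))ˣ) :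
            WithLp 2 (H × H) →L[ℂ] WithLp 2 (H × H))
          ((WithLp.equiv 2 (H × H)).symm (x, 0)) =
        (WithLp.equiv 2 (H × H)).symm (((T ^ n : (H →L[ℂ] H)ˣ) : H →L[ℂ] H) x, 0) :=
  quantum_annulus_explicit_dilation_general r T P Pinv D hP hP2 hPinv hPinv' hD hD2 That Thatinv
    hThat hThatinv
end

section
/- Let r > 1 and let J be an invertible bounded linear operator on a complex Hilbert space satisfying J*J + (J*J)⁻¹ = (r² + r⁻²)·I (i.e. J is a quantum annulus unitary). Then the operator U = (r/(1 + r²)) · (J + (J*)⁻¹) is a unitary operator. -/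
/-- If `J` is a quantum annulus unitary, i.e. an invertible bounded operator on a
complex Hilbert space satisfying `J*J + (J*J)⁻¹ = (r² + r⁻²)·I` (note that
`(J*J)⁻¹ = J⁻¹ (J*)⁻¹ = J⁻¹ · adjoint (J⁻¹)`), then `U = (r/(1+r²)) · (J + (J*)⁻¹)` is unitary. -/
theorem quantum_annulus_unitary_gives_unitary
    {H : Type*} [NormedAddCommGroup H] [InnerProductSpace ℂ H] [CompleteSpace H]
    (r : ℝ) (hr : 1 < r) (J : (H →L[ℂ] H)ˣ)
    (hJ : ContinuousLinearMap.adjoint (J : H →L[ℂ] H) * (J : H →L[ℂ] H) +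
        ((J⁻¹ : (H →L[ℂ] H)ˣ) : H →L[ℂ] H) *
          ContinuousLinearMap.adjoint ((J⁻¹ : (H →L[ℂ] H)ˣ) : H →L[ℂ] H) =
      ((r ^ 2 + r⁻¹ ^ 2 : ℝ) : ℂ) • (1 : H →L[ℂ] H)) :
    ContinuousLinearMap.adjoint
        (((r / (1 + r ^ 2) : ℝ) : ℂ) •
          ((J : H →L[ℂ] H) +
            ContinuousLinearMap.adjoint ((J⁻¹ : (H →L[ℂ] H)ˣ) : H →L[ℂ] H))) *
      (((r / (1 + r ^ 2) : ℝ) : ℂ) •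
        ((J : H →L[ℂ] H) +
          ContinuousLinearMap.adjoint ((J⁻¹ : (H →L[ℂ] H)ˣ) : H →L[ℂ] H))) = 1 ∧
    (((r / (1 + r ^ 2) : ℝ) : ℂ) •
        ((J : H →L[ℂ] H) +
          ContinuousLinearMap.adjoint ((J⁻¹ : (H →L[ℂ] H)ˣ) : H →L[ℂ] H))) *
      ContinuousLinearMap.adjoint
        (((r / (1 + r ^ 2) : ℝ) : ℂ) •
          ((J : H →L[ℂ] H) +
            ContinuousLinearMap.adjoint ((J⁻¹ : (H →L[ℂ] H)ˣ) : H →L[ℂ] H))) = 1 := by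
  set a : H →L[ℂ] H := (J : H →L[ℂ] H) with ha
  set b : H →L[ℂ] H := ((J⁻¹ : (H →L[ℂ] H)ˣ) : H →L[ℂ] H) with hb
  have hab : a * b = 1 := by
    simp [ha, hb, ← Units.val_mul]
  have hba : b * a = 1 := by
    simp [ha, hb, ← Units.val_mul]
  set A : H →L[ℂ] H := ContinuousLinearMap.adjoint a with hA
  set B : H →L[ℂ] H := ContinuousLinearMap.adjoint b with hB
  have hAB : A * B = 1 := by
    rw [hA, hB, ← ContinuousLinearMap.star_eq_adjoint, ← ContinuousLinearMap.star_eq_adjoint,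
      ← star_mul, hba, star_one]
  have hBA : B * A = 1 := by
    rw [hA, hB, ← ContinuousLinearMap.star_eq_adjoint, ← ContinuousLinearMap.star_eq_adjoint,
      ← star_mul, hab, star_one]
  set c : ℂ := ((r ^ 2 + r⁻¹ ^ 2 : ℝ) : ℂ) with hc
  set s : ℂ := ((r / (1 + r ^ 2) : ℝ) : ℂ) with hs
  have hr0 : (r : ℝ) ≠ 0 := by positivity
  have hr1 : (1 + r ^ 2 : ℝ) ≠ 0 := by positivity
  have hscal : s ^ 2 * (c + 2) = 1 := by
    rw [hs, hc]
    have h1 : (r : ℂ) ≠ 0 := by exact_mod_cast hr0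
    have h2 : ((1 + r ^ 2 : ℝ) : ℂ) ≠ 0 := by exact_mod_cast hr1
    push_cast
    push_cast at h2
    field_simp
    ring
  -- hJ : A * a + b * B = c • 1
  have hJ' : A * a + b * B = c • 1 := hJ
  have hJ2 : a * A + B * b = c • 1 := by
    have := congrArg (fun X => a * X * b) hJ'
    simp only [mul_add, add_mul] at this
    calc a * A + B * b = a * (A * a) * b + a * (b * B) * b := by
          have e1 : a * (A * a) * b = a * A * (a * b) := by noncomm_ring
          have e2 : a * (b * B) * b = (a * b) * (B * b) := by noncomm_ring
          rw [e1, e2, hab]; noncomm_ring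
      _ = a * (c • 1) * b := this
      _ = c • 1 := by
          rw [mul_smul_comm, smul_mul_assoc]
          simp [hab]
  have hadjU : ContinuousLinearMap.adjoint (s • (a + B)) = s • (A + b) := by
    rw [← ContinuousLinearMap.star_eq_adjoint, star_smul, star_add,
      ContinuousLinearMap.star_eq_adjoint, ContinuousLinearMap.star_eq_adjoint, ← hA, hB,
      ContinuousLinearMap.adjoint_adjoint, hs]
    simp [Complex.star_def, Complex.conj_ofReal]
  constructor
  · rw [hadjU, smul_mul_smul_comm]
    have expand : (A + b) * (a + B) = (c + 2) • 1 := by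
      have : (A + b) * (a + B) = (A * a + b * B) + (A * B + b * a) := by noncomm_ring
      rw [this, hJ', hAB, hba]
      module
    rw [expand, smul_smul, ← sq, hscal, one_smul]
  · rw [hadjU, smul_mul_smul_comm]
    have expand : (a + B) * (A + b) = (c + 2) • 1 := by
      have : (a + B) * (A + b) = (a * A + B * b) + (a * b + B * A) := by noncomm_ring
      rw [this, hJ2, hab, hBA]
      module
    rw [expand, smul_smul, ← sq, hscal, one_smul]
end

section
/- Let r > 1, let J be a quantum annulus unitary on a complex Hilbert space H with ‖J‖ = ‖J⁻¹‖ = r, and let A, B be bounded operators (not necessarily commuting) on a complex Hilbert space L. Then the operator C = A ⊗ J + B ⊗ (J*)⁻¹ on the Hilbert space tensor product L ⊗ H is an isometry (i.e. C*C = I) if and only if A*A = B*B and A*B + B*A + (r² + r⁻²)·A*A = I. -/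
/-!
With `P = A*A - B*B` and `Q = A*B + B*A + (r² + r⁻²) B*B - 1`, the annulus relation
`((J*)⁻¹)* (J*)⁻¹ = (r² + r⁻²) - J*J` gives on elementary tensors
`⟪C(x⊗y), C(x'⊗y')⟫ - ⟪x⊗y, x'⊗y'⟫ = ⟪x, P x'⟫⟪Jy, Jy'⟫ + ⟪x, Q x'⟫⟪y, y'⟫`.
By density, `C` is an isometry iff this vanishes, i.e. iff `‖Jy‖² P + ‖y‖² Q = 0` for all `y`.
Two vectors with different ratios `‖Jy‖ / ‖y‖` then force `P = Q = 0`, and such vectors exist: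
a constant ratio would give `‖J‖ ‖J⁻¹‖ ≤ 1`, whereas here `‖J‖ ‖J⁻¹‖ = r² > 1`.
-/

open ContinuousLinearMap
open scoped InnerProductSpace

theorem eq_zero_and_eq_zero_of_smul_add_smul_eq_zero {K V : Type*} [Field K] [AddCommGroup V]
    [Module K V] {a₁ b₁ a₂ b₂ : K} {P Q : V} (hdet : a₁ * b₂ - a₂ * b₁ ≠ 0)
    (h₁ : a₁ • P + b₁ • Q = 0) (h₂ : a₂ • P + b₂ • Q = 0) : P = 0 ∧ Q = 0 := by
  have hP : (a₁ * b₂ - a₂ * b₁) • P = b₂ • (a₁ • P + b₁ • Q) - b₁ • (a₂ • P + b₂ • Q) := by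
    module
  have hQ : (a₁ * b₂ - a₂ * b₁) • Q = a₁ • (a₂ • P + b₂ • Q) - a₂ • (a₁ • P + b₁ • Q) := by
    module
  simp only [h₁, h₂, smul_zero, sub_zero] at hP hQ
  exact ⟨(smul_eq_zero.mp hP).resolve_left hdet, (smul_eq_zero.mp hQ).resolve_left hdet⟩

theorem Units.exists_norm_apply_mul_norm_ne {𝕜 E : Type*} [RCLike 𝕜] [NormedAddCommGroup E]
    [NormedSpace 𝕜 E] {J : (E →L[𝕜] E)ˣ}
    (hJ : 1 < ‖(J : E →L[𝕜] E)‖ * ‖((J⁻¹ : (E →L[𝕜] E)ˣ) : E →L[𝕜] E)‖) :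
    ∃ y z : E, ‖(J : E →L[𝕜] E) y‖ * ‖z‖ ≠ ‖(J : E →L[𝕜] E) z‖ * ‖y‖ := by
  set T : E →L[𝕜] E := ↑J
  set T' : E →L[𝕜] E := ↑J⁻¹
  by_contra! h
  have hTT' : ∀ z, T (T' z) = z := fun z => by
    rw [← mul_apply_eq_comp, J.mul_inv, one_apply_eq_self]
  have hz : ∀ z, ‖T‖ * ‖T' z‖ ≤ ‖z‖ := fun z => by
    have : ‖((‖T' z‖ : ℝ) : 𝕜) • T‖ ≤ ‖z‖ :=
      opNorm_le_bound _ (norm_nonneg z) fun y => by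
        rw [smul_apply, norm_smul, RCLike.norm_ofReal, abs_norm, mul_comm, h y (T' z), hTT']
    rwa [norm_smul, RCLike.norm_ofReal, abs_norm, mul_comm] at this
  have : ‖((‖T‖ : ℝ) : 𝕜) • T'‖ ≤ 1 :=
    opNorm_le_bound _ zero_le_one fun z => by
      rw [smul_apply, norm_smul, RCLike.norm_ofReal, abs_norm, one_mul]
      exact hz z
  rw [norm_smul, RCLike.norm_ofReal, abs_norm] at this
  exact this.not_gt hJ

section Hilbert

variable {𝕜 E F G : Type*} [RCLike 𝕜]
  [NormedAddCommGroup E] [InnerProductSpace 𝕜 E]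
  [NormedAddCommGroup F] [InnerProductSpace 𝕜 F]
  [NormedAddCommGroup G] [InnerProductSpace 𝕜 G]

theorem forall_inner_mul_add_eq_zero_iff {P Q : F →L[𝕜] F} {T : E →L[𝕜] E}
    (hT : ∃ y z : E, ‖T y‖ * ‖z‖ ≠ ‖T z‖ * ‖y‖) :
    (∀ x y x' y', ⟪x, P x'⟫_𝕜 * ⟪T y, T y'⟫_𝕜 + ⟪x, Q x'⟫_𝕜 * ⟪y, y'⟫_𝕜 = 0) ↔
      P = 0 ∧ Q = 0 := by
  refine ⟨fun h => ?_, by rintro ⟨rfl, rfl⟩; simp⟩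
  have hdiag : ∀ y, ⟪T y, T y⟫_𝕜 • P + ⟪y, y⟫_𝕜 • Q = 0 := fun y =>
    ext fun x' => ext_inner_left 𝕜 fun x => by
      simpa [inner_add_right, inner_smul_right, mul_comm] using h x y x' y
  obtain ⟨y, z, hyz⟩ := hT
  refine eq_zero_and_eq_zero_of_smul_add_smul_eq_zero ?_ (hdiag y) (hdiag z)
  simp only [inner_self_eq_norm_sq_to_K]
  norm_cast
  rwa [← mul_pow, ← mul_pow, sub_eq_zero, sq_eq_sq₀ (by positivity) (by positivity)]

variable [CompleteSpace E] [CompleteSpace F]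

theorem ContinuousLinearMap.adjoint_comp_self_eq_id_iff_of_dense_span {S : Set E}
    (hS : Dense (Submodule.span 𝕜 S : Set E)) (C : E →L[𝕜] F) :
    adjoint C ∘L C = .id 𝕜 E ↔ ∀ t ∈ S, ∀ t' ∈ S, ⟪C t, C t'⟫_𝕜 = ⟪t, t'⟫_𝕜 := by
  constructor
  · intro h t _ t' _
    rw [← adjoint_inner_right, ← comp_apply, h, id_apply]
  · intro h
    refine ext_on hS fun t' ht' => ?_
    have hinner : innerSL 𝕜 (adjoint C (C t')) = innerSL 𝕜 t' :=
      ext_on hS fun t ht => by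
        simp only [innerSL_apply_apply, adjoint_inner_left]
        exact h t' ht' t ht
    exact innerSL_inj.mp hinner

namespace Units

variable (J : (E →L[𝕜] E)ˣ)

theorem inner_apply_adjoint_inv_apply (u v : E) :
    ⟪(J : E →L[𝕜] E) u, adjoint (↑J⁻¹ : E →L[𝕜] E) v⟫_𝕜 = ⟪u, v⟫_𝕜 := by
  rw [adjoint_inner_right, ← mul_apply_eq_comp, J.inv_mul, one_apply_eq_self]

theorem inner_adjoint_inv_apply_apply (u v : E) :
    ⟪adjoint (↑J⁻¹ : E →L[𝕜] E) u, (J : E →L[𝕜] E) v⟫_𝕜 = ⟪u, v⟫_𝕜 := by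
  rw [adjoint_inner_left, ← mul_apply_eq_comp, J.inv_mul, one_apply_eq_self]

theorem inner_adjoint_inv_apply_adjoint_inv_apply {s : 𝕜}
    (hJ : adjoint (J : E →L[𝕜] E) * J + ↑J⁻¹ * adjoint (↑J⁻¹ : E →L[𝕜] E) = s • 1) (u v : E) :
    ⟪adjoint (↑J⁻¹ : E →L[𝕜] E) u, adjoint (↑J⁻¹ : E →L[𝕜] E) v⟫_𝕜 =
      s * ⟪u, v⟫_𝕜 - ⟪(J : E →L[𝕜] E) u, (J : E →L[𝕜] E) v⟫_𝕜 := by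
  rw [adjoint_inner_left, ← mul_apply_eq_comp, eq_sub_of_add_eq' hJ, sub_apply, smul_apply,
    one_apply_eq_self, inner_sub_right, inner_smul_right, mul_apply_eq_comp, adjoint_inner_right]

end Units

theorem inner_map_tensor_eq_inner_add [CompleteSpace G] (J : (E →L[𝕜] E)ˣ) {s : 𝕜}
    (hJ : adjoint (J : E →L[𝕜] E) * J + ↑J⁻¹ * adjoint (↑J⁻¹ : E →L[𝕜] E) = s • 1)
    (A B : F →L[𝕜] F) (tensor : F →ₗ[𝕜] E →ₗ[𝕜] G)
    (htensor : ∀ x x' y y', ⟪tensor x y, tensor x' y'⟫_𝕜 = ⟪x, x'⟫_𝕜 * ⟪y, y'⟫_𝕜)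
    (C : G →L[𝕜] G)
    (hC : ∀ x y, C (tensor x y) =
      tensor (A x) ((J : E →L[𝕜] E) y) + tensor (B x) (adjoint (↑J⁻¹ : E →L[𝕜] E) y))
    (x : F) (y : E) (x' : F) (y' : E) :
    ⟪C (tensor x y), C (tensor x' y')⟫_𝕜 = ⟪tensor x y, tensor x' y'⟫_𝕜 +
      (⟪x, (adjoint A * A - adjoint B * B) x'⟫_𝕜 * ⟪(J : E →L[𝕜] E) y, (J : E →L[𝕜] E) y'⟫_𝕜 +
        ⟪x, (adjoint A * B + adjoint B * A + s • (adjoint B * B) - 1) x'⟫_𝕜 * ⟪y, y'⟫_𝕜) := by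
  simp only [hC, inner_add_left, inner_add_right, htensor, J.inner_apply_adjoint_inv_apply,
    J.inner_adjoint_inv_apply_apply, J.inner_adjoint_inv_apply_adjoint_inv_apply hJ, sub_apply,
    add_apply, smul_apply, one_apply_eq_self, mul_apply_eq_comp, inner_sub_right,
    inner_add_right, inner_smul_right, adjoint_inner_right]
  ring

end Hilbert

open ContinuousLinearMap in
/-- Let `J` be a quantum annulus unitary on a complex Hilbert space `H` with
`‖J‖ = ‖J⁻¹‖ = r`, and let `A, B` be bounded operators on a complex Hilbert space `L`.
Let `K` together with the bilinear map `tensor` (with `⟪x⊗y, x'⊗y'⟫ = ⟪x,x'⟫⟪y,y'⟫` and dense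
span of elementary tensors) be the Hilbert space tensor product `L ⊗ H`, and let
`C = A ⊗ J + B ⊗ (J*)⁻¹` (note `(J*)⁻¹ = adjoint (J⁻¹)`).  Then `C` is an isometry
(`C*C = I`) if and only if `A*A = B*B` and `A*B + B*A + (r²+r⁻²)·A*A = I`. -/
theorem tensor_isometry_iff
    {H L K : Type*}
    [NormedAddCommGroup H] [InnerProductSpace ℂ H] [CompleteSpace H]
    [NormedAddCommGroup L] [InnerProductSpace ℂ L] [CompleteSpace L]
    [NormedAddCommGroup K] [InnerProductSpace ℂ K] [CompleteSpace K]
    (r : ℝ) (hr : 1 < r) (J : (H →L[ℂ] H)ˣ)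
    (hJ : adjoint (J : H →L[ℂ] H) * (J : H →L[ℂ] H) +
        ((J⁻¹ : (H →L[ℂ] H)ˣ) : H →L[ℂ] H) *
          adjoint ((J⁻¹ : (H →L[ℂ] H)ˣ) : H →L[ℂ] H) =
      ((r ^ 2 + r⁻¹ ^ 2 : ℝ) : ℂ) • (1 : H →L[ℂ] H))
    (hJnorm : ‖(J : H →L[ℂ] H)‖ = r)
    (hJinvnorm : ‖((J⁻¹ : (H →L[ℂ] H)ˣ) : H →L[ℂ] H)‖ = r)
    (A B : L →L[ℂ] L)
    (tensor : L →ₗ[ℂ] H →ₗ[ℂ] K)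
    (htensor : ∀ (x x' : L) (y y' : H),
      (inner ℂ (tensor x y) (tensor x' y') : ℂ) = (inner ℂ x x' : ℂ) * (inner ℂ y y' : ℂ))
    (hdense : Dense (Submodule.span ℂ {k : K | ∃ x y, k = tensor x y} : Set K))
    (C : K →L[ℂ] K)
    (hC : ∀ (x : L) (y : H),
      C (tensor x y) =
        tensor (A x) ((J : H →L[ℂ] H) y) +
          tensor (B x) (adjoint ((J⁻¹ : (H →L[ℂ] H)ˣ) : H →L[ℂ] H) y)) :
    adjoint C * C = 1 ↔
      (adjoint A * A = adjoint B * B ∧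
        adjoint A * B + adjoint B * A +
          ((r ^ 2 + r⁻¹ ^ 2 : ℝ) : ℂ) • (adjoint A * A) = 1) := by
  have hJJ : 1 < ‖(J : H →L[ℂ] H)‖ * ‖((J⁻¹ : (H →L[ℂ] H)ˣ) : H →L[ℂ] H)‖ := by
    rw [hJnorm, hJinvnorm]
    nlinarith
  rw [mul_def, one_def, adjoint_comp_self_eq_id_iff_of_dense_span hdense]
  simp only [Set.mem_ofPred_eq, forall_exists_index, forall_comm (α := K), forall_eq,
    inner_map_tensor_eq_inner_add J hJ A B tensor htensor C hC, add_eq_left]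
  rw [forall_inner_mul_add_eq_zero_iff (Units.exists_norm_apply_mul_norm_ne hJJ), sub_eq_zero,
    sub_eq_zero]
  exact and_congr_right fun hAB => by rw [hAB]
end

section
/- Let r > 1, let J be a quantum annulus unitary on a complex Hilbert space H with ‖J‖ = ‖J⁻¹‖ = r, and let A, B be bounded operators (not necessarily commuting) on a complex Hilbert space L. Then the operator C = A ⊗ J + B ⊗ (J*)⁻¹ on the Hilbert space tensor product L ⊗ H is unitary if and only if the following four conditions hold: (i) A*A = B*B; (ii) A*B + B*A + (r² + r⁻²)·A*A = I; (iii) AA* = BB*; and (iv) AB* + BA* + (r² + r⁻²)·AA* = I. -/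
/-!
With `s = r² + r⁻²`, the relation `J⁻¹ (J⁻¹)* = s - J*J` gives, on elementary tensors,
`⟪C(x⊗y), C(x'⊗y')⟫ - ⟪x⊗y, x'⊗y'⟫`
`  = ⟪x, (A*A - B*B) x'⟫ ⟪y, J*J y'⟫ + ⟪x, (A*B + B*A + s B*B - 1) x'⟫ ⟪y, y'⟫`.
As elementary tensors span a dense subspace, `C*C = 1` iff this vanishes, and as `J*J` is not a
scalar, iff both operator coefficients vanish, which is (i) and (ii). `J*J` is not a scalar
because `J*J = c` would give `‖J‖² = |c|` and `‖J⁻¹‖² = |c|⁻¹` by the C*-identity, whereas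
`‖J‖ = ‖J⁻¹‖ = r > 1`. Conjugating the defining relation by `J` gives `JJ* + (JJ*)⁻¹ = s`, and the
same argument applied to `C* = A* ⊗ J* + B* ⊗ J⁻¹` gives (iii) and (iv).
-/

open ContinuousLinearMap
open scoped InnerProductSpace

section CStarRing

variable {𝕜 E : Type*} [NormedField 𝕜] [NormedRing E] [StarRing E] [CStarRing E]
  [NormedAlgebra 𝕜 E] [Nontrivial E]

theorem norm_mul_norm_inv_eq_one_of_star_mul_self_eq_smul_one (u : Eˣ) {c : 𝕜}
    (h : star (u : E) * u = c • 1) : ‖(u : E)‖ * ‖(↑u⁻¹ : E)‖ = 1 := by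
  have hu : ‖(u : E)‖ ^ 2 = ‖c‖ := by
    rw [sq, ← CStarRing.norm_star_mul_self, h, norm_smul, CStarRing.norm_one, mul_one]
  have hinv : c • ((↑u⁻¹ : E) * star (↑u⁻¹ : E)) = 1 := by
    rw [← smul_one_mul, ← h, mul_assoc, ← mul_assoc (u : E), Units.mul_inv, one_mul, ← star_mul,
      Units.inv_mul, star_one]
  have huinv : ‖c‖ * ‖(↑u⁻¹ : E)‖ ^ 2 = 1 := by
    rw [sq, ← CStarRing.norm_self_mul_star, ← norm_smul, hinv, CStarRing.norm_one]
  have hsq : (‖(u : E)‖ * ‖(↑u⁻¹ : E)‖) ^ 2 = 1 := by rw [mul_pow, hu, huinv]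
  exact (pow_eq_one_iff_of_nonneg (by positivity) two_ne_zero).mp hsq

theorem linearIndependent_star_mul_self_one (u : Eˣ) (hu : ‖(u : E)‖ * ‖(↑u⁻¹ : E)‖ ≠ 1) :
    LinearIndependent 𝕜 ![star (u : E) * u, 1] := by
  rw [LinearIndependent.pair_iff]
  intro a b hab
  by_cases ha : a = 0
  · subst ha
    simpa using hab
  · refine absurd (norm_mul_norm_inv_eq_one_of_star_mul_self_eq_smul_one u
      (c := -(a⁻¹ * b)) (smul_right_injective E ha ?_)) hu
    show a • _ = a • _
    rw [smul_smul, mul_neg, ← mul_assoc, mul_inv_cancel₀ ha, one_mul, neg_smul,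
      eq_neg_iff_add_eq_zero, hab]

theorem linearIndependent_mul_star_self_one (u : Eˣ) (hu : ‖(u : E)‖ * ‖(↑u⁻¹ : E)‖ ≠ 1) :
    LinearIndependent 𝕜 ![(u : E) * star (u : E), 1] := by
  simpa only [Units.coe_star, star_star] using
    linearIndependent_star_mul_self_one (star u)
      (by rwa [Units.coe_star, Units.coe_star_inv, norm_star, norm_star])

end CStarRing

theorem Units.mul_add_mul_inv_eq_of_mul_add_inv_mul_eq {S R : Type*} [CommSemiring S] [Semiring R]
    [Algebra S R] (u : Rˣ) {a b : R} {c : S} (h : a * u + ↑u⁻¹ * b = c • 1) :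
    u * a + b * ↑u⁻¹ = c • 1 :=
  calc (u : R) * a + b * ↑u⁻¹ = u * (a * u + ↑u⁻¹ * b) * ↑u⁻¹ := by
        simp only [mul_add, add_mul, mul_assoc, Units.mul_inv, Units.mul_inv_cancel_left, mul_one]
    _ = c • 1 := by rw [h, mul_smul_comm, mul_one, smul_mul_assoc, Units.mul_inv]

section DenseSpan

variable {𝕜 K : Type*} [RCLike 𝕜] [NormedAddCommGroup K] [InnerProductSpace 𝕜 K] {s : Set K}

theorem eq_of_forall_inner_eq_of_dense_span (hs : Dense (Submodule.span 𝕜 s : Set K)) {a b : K}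
    (h : ∀ v ∈ s, ⟪a, v⟫_𝕜 = ⟪b, v⟫_𝕜) : a = b := by
  have hab : innerSL 𝕜 a = innerSL 𝕜 b := ext_on hs h
  exact ext_inner_right 𝕜 fun v => congr($hab v)

theorem ContinuousLinearMap.ext_inner_of_dense_span (hs : Dense (Submodule.span 𝕜 s : Set K))
    {T S : K →L[𝕜] K} (h : ∀ u ∈ s, ∀ v ∈ s, ⟪T u, v⟫_𝕜 = ⟪S u, v⟫_𝕜) : T = S :=
  ext_on hs fun u hu => eq_of_forall_inner_eq_of_dense_span hs (h u hu)

theorem ContinuousLinearMap.adjoint_mul_self_eq_one_iff_of_dense_span [CompleteSpace K]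
    (hs : Dense (Submodule.span 𝕜 s : Set K)) (C : K →L[𝕜] K) :
    adjoint C * C = 1 ↔ ∀ u ∈ s, ∀ v ∈ s, ⟪C u, C v⟫_𝕜 = ⟪u, v⟫_𝕜 := by
  refine ⟨fun h u _ v _ => ?_, fun h => ext_inner_of_dense_span hs fun u hu v hv => ?_⟩
  · rw [← adjoint_inner_left, ← mul_apply_eq_comp, h, one_apply_eq_self]
  · rw [mul_apply_eq_comp, adjoint_inner_left, one_apply_eq_self, h u hu v hv]

end DenseSpan

theorem forall_inner_mul_inner_add_eq_zero_iff {𝕜 L H : Type*} [RCLike 𝕜]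
    [NormedAddCommGroup L] [InnerProductSpace 𝕜 L] [NormedAddCommGroup H] [InnerProductSpace 𝕜 H]
    {P R : L →L[𝕜] L} {M N : H →L[𝕜] H} (hMN : LinearIndependent 𝕜 ![M, N]) :
    (∀ x x' y y', ⟪x, P x'⟫_𝕜 * ⟪y, M y'⟫_𝕜 + ⟪x, R x'⟫_𝕜 * ⟪y, N y'⟫_𝕜 = 0) ↔
      P = 0 ∧ R = 0 := by
  refine ⟨fun h => ?_, by rintro ⟨rfl, rfl⟩; simp⟩
  have hcoef : ∀ x x', ⟪x, P x'⟫_𝕜 = 0 ∧ ⟪x, R x'⟫_𝕜 = 0 := fun x x' =>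
    LinearIndependent.pair_iff.mp hMN _ _ <| ext fun y' => ext_inner_left 𝕜 fun y => by
      simpa [inner_add_right, inner_smul_right] using h x x' y y'
  exact ⟨ext fun x' => ext_inner_left 𝕜 fun x => by simpa using (hcoef x x').1,
    ext fun x' => ext_inner_left 𝕜 fun x => by simpa using (hcoef x x').2⟩

section HilbertTensor

variable {𝕜 H L K : Type*} [RCLike 𝕜]
  [NormedAddCommGroup H] [InnerProductSpace 𝕜 H] [CompleteSpace H]
  [NormedAddCommGroup L] [InnerProductSpace 𝕜 L] [CompleteSpace L]
  [NormedAddCommGroup K] [InnerProductSpace 𝕜 K]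
  {tensor : L →ₗ[𝕜] H →ₗ[𝕜] K} {A B : L →L[𝕜] L} {U V : H →L[𝕜] H} {C : K →L[𝕜] K}

theorem adjoint_apply_tensor [CompleteSpace K]
    (htensor : ∀ x x' y y', ⟪tensor x y, tensor x' y'⟫_𝕜 = ⟪x, x'⟫_𝕜 * ⟪y, y'⟫_𝕜)
    (hdense : Dense (Submodule.span 𝕜 {k : K | ∃ x y, k = tensor x y} : Set K))
    (hC : ∀ x y, C (tensor x y) = tensor (A x) (U y) + tensor (B x) (V y)) (x : L) (y : H) :
    adjoint C (tensor x y) =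
      tensor (adjoint A x) (adjoint U y) + tensor (adjoint B x) (adjoint V y) := by
  refine eq_of_forall_inner_eq_of_dense_span hdense ?_
  rintro _ ⟨x', y', rfl⟩
  rw [adjoint_inner_left, hC, inner_add_left, inner_add_right, htensor, htensor, htensor, htensor,
    adjoint_inner_left, adjoint_inner_left, adjoint_inner_left, adjoint_inner_left]

theorem inner_apply_tensor_sub_inner
    (htensor : ∀ x x' y y', ⟪tensor x y, tensor x' y'⟫_𝕜 = ⟪x, x'⟫_𝕜 * ⟪y, y'⟫_𝕜)
    (hC : ∀ x y, C (tensor x y) = tensor (A x) (U y) + tensor (B x) (V y)) {s : 𝕜}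
    (hUV : adjoint U * V = 1) (hUV_sq : adjoint U * U + adjoint V * V = s • 1)
    (x x' : L) (y y' : H) :
    ⟪C (tensor x y), C (tensor x' y')⟫_𝕜 - ⟪tensor x y, tensor x' y'⟫_𝕜 =
      ⟪x, (adjoint A * A - adjoint B * B) x'⟫_𝕜 * ⟪y, (adjoint U * U) y'⟫_𝕜 +
        ⟪x, (adjoint A * B + adjoint B * A + s • (adjoint B * B) - 1) x'⟫_𝕜 *
          ⟪y, (1 : H →L[𝕜] H) y'⟫_𝕜 := by
  have hVU : adjoint V * U = 1 := by
    simpa only [← star_eq_adjoint, star_mul, star_star, star_one] using congr(star $hUV)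
  have hVV : adjoint V * V = s • 1 - adjoint U * U := eq_sub_of_add_eq' hUV_sq
  rw [hC, hC, inner_add_left, inner_add_right, inner_add_right, htensor, htensor, htensor, htensor,
    htensor]
  simp only [← adjoint_inner_right, ← mul_apply_eq_comp, hUV, hVU, hVV]
  simp only [sub_apply, add_apply, smul_apply, one_apply_eq_self, inner_sub_right,
    inner_add_right, inner_smul_right]
  ring

theorem adjoint_mul_self_eq_one_iff_of_apply_tensor [CompleteSpace K]
    (htensor : ∀ x x' y y', ⟪tensor x y, tensor x' y'⟫_𝕜 = ⟪x, x'⟫_𝕜 * ⟪y, y'⟫_𝕜)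
    (hdense : Dense (Submodule.span 𝕜 {k : K | ∃ x y, k = tensor x y} : Set K))
    (hC : ∀ x y, C (tensor x y) = tensor (A x) (U y) + tensor (B x) (V y)) {s : 𝕜}
    (hUV : adjoint U * V = 1) (hUV_sq : adjoint U * U + adjoint V * V = s • 1)
    (hU : LinearIndependent 𝕜 ![adjoint U * U, 1]) :
    adjoint C * C = 1 ↔
      adjoint A * A = adjoint B * B ∧ adjoint A * B + adjoint B * A + s • (adjoint A * A) = 1 := by
  rw [adjoint_mul_self_eq_one_iff_of_dense_span hdense]
  calc _ ↔ ∀ x x' y y', ⟪C (tensor x y), C (tensor x' y')⟫_𝕜 = ⟪tensor x y, tensor x' y'⟫_𝕜 :=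
        ⟨fun h x x' y y' => h _ ⟨x, y, rfl⟩ _ ⟨x', y', rfl⟩,
          by rintro h _ ⟨x, y, rfl⟩ _ ⟨x', y', rfl⟩; exact h x x' y y'⟩
    _ ↔ ∀ x x' y y', ⟪x, (adjoint A * A - adjoint B * B) x'⟫_𝕜 * ⟪y, (adjoint U * U) y'⟫_𝕜 +
        ⟪x, (adjoint A * B + adjoint B * A + s • (adjoint B * B) - 1) x'⟫_𝕜 *
          ⟪y, (1 : H →L[𝕜] H) y'⟫_𝕜 = 0 := by
        simp only [← inner_apply_tensor_sub_inner htensor hC hUV hUV_sq, sub_eq_zero]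
    _ ↔ _ := forall_inner_mul_inner_add_eq_zero_iff hU
    _ ↔ _ := by
      rw [sub_eq_zero, sub_eq_zero]
      exact and_congr_right fun h => by rw [h]

end HilbertTensor

open ContinuousLinearMap in
/-- Let `J` be a quantum annulus unitary on a complex Hilbert space `H` with
`‖J‖ = ‖J⁻¹‖ = r`, and let `A, B` be bounded operators on a complex Hilbert space `L`.
Let `K` together with the bilinear map `tensor` (with `⟪x⊗y, x'⊗y'⟫ = ⟪x,x'⟫⟪y,y'⟫` and dense
span of elementary tensors) be the Hilbert space tensor product `L ⊗ H`, and let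
`C = A ⊗ J + B ⊗ (J*)⁻¹`.  Then `C` is unitary (`C*C = CC* = I`) if and only if
(i) `A*A = B*B`, (ii) `A*B + B*A + (r²+r⁻²)·A*A = I`, (iii) `AA* = BB*`, and
(iv) `AB* + BA* + (r²+r⁻²)·AA* = I`. -/
theorem tensor_unitary_iff
    {H L K : Type*}
    [NormedAddCommGroup H] [InnerProductSpace ℂ H] [CompleteSpace H]
    [NormedAddCommGroup L] [InnerProductSpace ℂ L] [CompleteSpace L]
    [NormedAddCommGroup K] [InnerProductSpace ℂ K] [CompleteSpace K]
    (r : ℝ) (hr : 1 < r) (J : (H →L[ℂ] H)ˣ)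
    (hJ : adjoint (J : H →L[ℂ] H) * (J : H →L[ℂ] H) +
        ((J⁻¹ : (H →L[ℂ] H)ˣ) : H →L[ℂ] H) *
          adjoint ((J⁻¹ : (H →L[ℂ] H)ˣ) : H →L[ℂ] H) =
      ((r ^ 2 + r⁻¹ ^ 2 : ℝ) : ℂ) • (1 : H →L[ℂ] H))
    (hJnorm : ‖(J : H →L[ℂ] H)‖ = r)
    (hJinvnorm : ‖((J⁻¹ : (H →L[ℂ] H)ˣ) : H →L[ℂ] H)‖ = r)
    (A B : L →L[ℂ] L)
    (tensor : L →ₗ[ℂ] H →ₗ[ℂ] K)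
    (htensor : ∀ (x x' : L) (y y' : H),
      (inner ℂ (tensor x y) (tensor x' y') : ℂ) = (inner ℂ x x' : ℂ) * (inner ℂ y y' : ℂ))
    (hdense : Dense (Submodule.span ℂ {k : K | ∃ x y, k = tensor x y} : Set K))
    (C : K →L[ℂ] K)
    (hC : ∀ (x : L) (y : H),
      C (tensor x y) =
        tensor (A x) ((J : H →L[ℂ] H) y) +
          tensor (B x) (adjoint ((J⁻¹ : (H →L[ℂ] H)ˣ) : H →L[ℂ] H) y)) :
    (adjoint C * C = 1 ∧ C * adjoint C = 1) ↔
      (adjoint A * A = adjoint B * B ∧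
        adjoint A * B + adjoint B * A +
          ((r ^ 2 + r⁻¹ ^ 2 : ℝ) : ℂ) • (adjoint A * A) = 1 ∧
        A * adjoint A = B * adjoint B ∧
        A * adjoint B + B * adjoint A +
          ((r ^ 2 + r⁻¹ ^ 2 : ℝ) : ℂ) • (A * adjoint A) = 1) := by
  have : Nontrivial (H →L[ℂ] H) := nontrivial_of_ne (J : H →L[ℂ] H) 0 fun h => by
    rw [h, norm_zero] at hJnorm
    linarith
  have hJ_norms : ‖(J : H →L[ℂ] H)‖ * ‖((J⁻¹ : (H →L[ℂ] H)ˣ) : H →L[ℂ] H)‖ ≠ 1 := by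
    rw [hJnorm, hJinvnorm]
    nlinarith
  have hC_adj : ∀ x y, adjoint C (tensor x y) =
      tensor (adjoint A x) (adjoint (J : H →L[ℂ] H) y) +
        tensor (adjoint B x) (((J⁻¹ : (H →L[ℂ] H)ˣ) : H →L[ℂ] H) y) := by
    simpa only [adjoint_adjoint] using adjoint_apply_tensor htensor hdense hC
  have hCC := adjoint_mul_self_eq_one_iff_of_apply_tensor htensor hdense hC
    (by rw [← star_eq_adjoint, ← star_eq_adjoint, ← star_mul, J.inv_mul, star_one])
    (by rwa [adjoint_adjoint])
    (by simpa only [star_eq_adjoint] using linearIndependent_star_mul_self_one J hJ_norms)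
  have hCC_adj := adjoint_mul_self_eq_one_iff_of_apply_tensor htensor hdense hC_adj
    (by rw [adjoint_adjoint, J.mul_inv])
    (by rw [adjoint_adjoint]; exact Units.mul_add_mul_inv_eq_of_mul_add_inv_mul_eq J hJ)
    (by simpa only [star_eq_adjoint, adjoint_adjoint] using
      linearIndependent_mul_star_self_one J hJ_norms)
  simp only [adjoint_adjoint] at hCC_adj
  rw [hCC, hCC_adj, and_assoc]
end

section
/- Let r > 1 and let J be a quantum annulus unitary on a complex Hilbert space H with ‖J‖ = ‖J⁻¹‖ = r. For complex scalars a, b ∈ ℂ, the operator a·J + b·(J*)⁻¹ is unitary if and only if |a| = |b| and |r·a + r⁻¹·b| = 1; equivalently, if and only if there exists θ ∈ ℝ such that b = a·e^{iθ} and |a|² = (r² + r⁻² + 2cos θ)⁻¹. -/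
/-!
Put `T = a J + b (J*)⁻¹` and use `J⁻¹ (J⁻¹)* = (J*J)⁻¹ = (r² + r⁻²) - J*J`. Then
`T*T = (|a|² - |b|²) J*J + c` and `TT* = (|a|² - |b|²) JJ* + c` with the real scalar
`c = |b|² (r² + r⁻²) + 2 Re(a b̄)`. If `|a| ≠ |b|`, then `T*T = 1` makes `J*J` a scalar, and
the C*-identity gives `‖J‖ ‖J⁻¹‖ = 1`, contradicting `‖J‖ = ‖J⁻¹‖ = r > 1`. When `|a| = |b|`,
`c = |r a + r⁻¹ b|²`. The polar form comes from writing `b = a e^{iθ}`, so that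
`|r a + r⁻¹ b|² = |a|² (r² + r⁻² + 2 cos θ)`.
-/

open ComplexConjugate

lemma conj_mul_add_conj_mul (a b : ℂ) :
    conj a * b + conj b * a = ((2 * (a * conj b).re : ℝ) : ℂ) := by
  rw [← Complex.add_conj, map_mul, Complex.conj_conj]
  ring

section Expansion

variable {A : Type*} [Ring A] [StarRing A] [Algebra ℂ A] {u : Aˣ} {s : ℝ}

lemma self_mul_star_add_star_inv_mul_inv
    (hu : star ↑u * ↑u + ↑u⁻¹ * star ↑u⁻¹ = (s : ℂ) • (1 : A)) :
    ↑u * star ↑u + star ↑u⁻¹ * ↑u⁻¹ = (s : ℂ) • (1 : A) :=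
  calc ↑u * star ↑u + star ↑u⁻¹ * ↑u⁻¹
      = ↑u * (star ↑u * ↑u + ↑u⁻¹ * star ↑u⁻¹) * ↑u⁻¹ := by
        simp only [mul_add, add_mul, mul_assoc, Units.mul_inv, mul_one, Units.mul_inv_cancel_left]
    _ = (s : ℂ) • (1 : A) := by rw [hu, mul_smul_comm, mul_one, smul_mul_assoc, Units.mul_inv]

variable [StarModule ℂ A] {x y : A}

lemma star_mul_self_smul_add_smul_star (hyx : y * x = 1) (a b : ℂ) :
    star (a • x + b • star y) * (a • x + b • star y) =
      ((‖a‖ ^ 2 : ℝ) : ℂ) • (star x * x) + ((‖b‖ ^ 2 : ℝ) : ℂ) • (y * star y) +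
        ((2 * (a * conj b).re : ℝ) : ℂ) • 1 := by
  have hxy : star x * star y = 1 := by rw [← star_mul, hyx, star_one]
  simp only [star_add, star_smul, star_star, Complex.star_def, add_mul, mul_add,
    smul_mul_smul, hxy, hyx]
  rw [← conj_mul_add_conj_mul, Complex.ofReal_pow, Complex.ofReal_pow, ← Complex.conj_mul',
    ← Complex.conj_mul']
  module

lemma self_mul_star_smul_add_smul_star (hxy : x * y = 1) (a b : ℂ) :
    (a • x + b • star y) * star (a • x + b • star y) =
      ((‖a‖ ^ 2 : ℝ) : ℂ) • (x * star x) + ((‖b‖ ^ 2 : ℝ) : ℂ) • (star y * y) +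
        ((2 * (a * conj b).re : ℝ) : ℂ) • 1 := by
  have hyx : star y * star x = 1 := by rw [← star_mul, hxy, star_one]
  simp only [star_add, star_smul, star_star, Complex.star_def, add_mul, mul_add,
    smul_mul_smul, hyx, hxy]
  rw [← conj_mul_add_conj_mul, Complex.ofReal_pow, Complex.ofReal_pow, ← Complex.conj_mul',
    ← Complex.conj_mul']
  module

lemma star_mul_self_smul_add_smul_star_inv
    (hu : star ↑u * ↑u + ↑u⁻¹ * star ↑u⁻¹ = (s : ℂ) • (1 : A)) (a b : ℂ) :
    star (a • (u : A) + b • star ↑u⁻¹) * (a • (u : A) + b • star ↑u⁻¹) =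
      ((‖a‖ ^ 2 - ‖b‖ ^ 2 : ℝ) : ℂ) • (star ↑u * ↑u) +
        ((‖b‖ ^ 2 * s + 2 * (a * conj b).re : ℝ) : ℂ) • 1 := by
  rw [star_mul_self_smul_add_smul_star u.inv_mul, eq_sub_of_add_eq' hu]
  push_cast
  module

lemma self_mul_star_smul_add_smul_star_inv
    (hu : star ↑u * ↑u + ↑u⁻¹ * star ↑u⁻¹ = (s : ℂ) • (1 : A)) (a b : ℂ) :
    (a • (u : A) + b • star ↑u⁻¹) * star (a • (u : A) + b • star ↑u⁻¹) =
      ((‖a‖ ^ 2 - ‖b‖ ^ 2 : ℝ) : ℂ) • (↑u * star ↑u) +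
        ((‖b‖ ^ 2 * s + 2 * (a * conj b).re : ℝ) : ℂ) • 1 := by
  rw [self_mul_star_smul_add_smul_star u.mul_inv,
    eq_sub_of_add_eq' (self_mul_star_add_star_inv_mul_inv hu)]
  push_cast
  module

end Expansion

lemma norm_mul_norm_inv_eq_one_of_star_mul_self_eq_smul_one_s5 {A : Type*} [NormedRing A]
    [StarRing A] [CStarRing A] [NormedAlgebra ℂ A] [Nontrivial A] (u : Aˣ) (μ : ℂ)
    (h : star ↑u * ↑u = μ • (1 : A)) : ‖(u : A)‖ * ‖(↑u⁻¹ : A)‖ = 1 := by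
  have hsq : (‖(u : A)‖ * ‖(↑u⁻¹ : A)‖) ^ 2 = 1 :=
    calc (‖(u : A)‖ * ‖(↑u⁻¹ : A)‖) ^ 2
        = ‖star (u : A) * ↑u‖ * ‖(↑u⁻¹ : A) * star ↑u⁻¹‖ := by
          rw [CStarRing.norm_star_mul_self, CStarRing.norm_self_mul_star]; ring
      _ = ‖star (u : A) * ↑u * (↑u⁻¹ * star ↑u⁻¹)‖ := by
          rw [h, smul_mul_assoc, one_mul, norm_smul, norm_smul, norm_one, mul_one]
      _ = 1 := by
          rw [mul_assoc, Units.mul_inv_cancel_left, ← star_mul, Units.inv_mul, star_one,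
            norm_one]
  exact (pow_eq_one_iff_of_nonneg (by positivity) two_ne_zero).mp hsq

lemma norm_ofReal_mul_add_ofReal_inv_mul_sq {r : ℝ} (hr : r ≠ 0) {a b : ℂ} (hab : ‖a‖ = ‖b‖) :
    ‖(r : ℂ) * a + ((r⁻¹ : ℝ) : ℂ) * b‖ ^ 2 =
      ‖b‖ ^ 2 * (r ^ 2 + r⁻¹ ^ 2) + 2 * (a * conj b).re := by
  have hcross : (r : ℂ) * a * conj (((r⁻¹ : ℝ) : ℂ) * b) = a * conj b := by
    rw [map_mul, Complex.conj_ofReal, Complex.ofReal_inv, mul_mul_mul_comm,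
      mul_inv_cancel₀ (Complex.ofReal_ne_zero.mpr hr), one_mul]
  rw [Complex.sq_norm, Complex.normSq_add, hcross, Complex.normSq_mul, Complex.normSq_mul,
    Complex.normSq_ofReal, Complex.normSq_ofReal, ← Complex.sq_norm, ← Complex.sq_norm, hab]
  ring

theorem smul_add_smul_star_inv_mem_unitary_iff {A : Type*} [NormedRing A] [StarRing A]
    [CStarRing A] [NormedAlgebra ℂ A] [StarModule ℂ A] {r : ℝ} (hr : 1 < r) {u : Aˣ}
    (hu : star ↑u * ↑u + ↑u⁻¹ * star ↑u⁻¹ = ((r ^ 2 + r⁻¹ ^ 2 : ℝ) : ℂ) • (1 : A))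
    (hnorm : ‖(u : A)‖ = r) (hnorm_inv : ‖(↑u⁻¹ : A)‖ = r) (a b : ℂ) :
    a • (u : A) + b • star ↑u⁻¹ ∈ unitary A ↔
      ‖a‖ = ‖b‖ ∧ ‖(r : ℂ) * a + ((r⁻¹ : ℝ) : ℂ) * b‖ = 1 := by
  have hr₀ : r ≠ 0 := by positivity
  have : Nontrivial A :=
    nontrivial_of_ne (u : A) 0 (by rw [← norm_ne_zero_iff, hnorm]; exact hr₀)
  rw [Unitary.mem_iff, star_mul_self_smul_add_smul_star_inv hu,
    self_mul_star_smul_add_smul_star_inv hu]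
  constructor
  · rintro ⟨h, -⟩
    have hd : ‖a‖ ^ 2 - ‖b‖ ^ 2 = 0 := by
      by_contra hd
      set d : ℂ := ((‖a‖ ^ 2 - ‖b‖ ^ 2 : ℝ) : ℂ)
      set c : ℂ := ((‖b‖ ^ 2 * (r ^ 2 + r⁻¹ ^ 2) + 2 * (a * conj b).re : ℝ) : ℂ)
      have hscalar : star ↑u * ↑u = (d⁻¹ * (1 - c)) • (1 : A) := by
        rw [mul_smul, sub_smul, one_smul, ← eq_sub_of_add_eq h, smul_smul,
          inv_mul_cancel₀ (Complex.ofReal_ne_zero.mpr hd), one_smul]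
      have := norm_mul_norm_inv_eq_one_of_star_mul_self_eq_smul_one_s5 u _ hscalar
      rw [hnorm, hnorm_inv] at this
      nlinarith
    have hab : ‖a‖ = ‖b‖ := by nlinarith [norm_nonneg a, norm_nonneg b]
    rw [hd, Complex.ofReal_zero, zero_smul, zero_add, ← Algebra.algebraMap_eq_smul_one,
      ← map_one (algebraMap ℂ A), (algebraMap ℂ A).injective.eq_iff] at h
    refine ⟨hab, (pow_eq_one_iff_of_nonneg (norm_nonneg _) two_ne_zero).mp ?_⟩
    rw [norm_ofReal_mul_add_ofReal_inv_mul_sq hr₀ hab]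
    exact_mod_cast h
  · rintro ⟨hab, hone⟩
    have hc := norm_ofReal_mul_add_ofReal_inv_mul_sq hr₀ hab
    rw [hone, one_pow] at hc
    rw [hab, sub_self, ← hc]
    simp

lemma norm_ofReal_add_ofReal_inv_mul_exp_sq {r : ℝ} (hr : r ≠ 0) (θ : ℝ) :
    ‖(r : ℂ) + ((r⁻¹ : ℝ) : ℂ) * Complex.exp (θ * Complex.I)‖ ^ 2 =
      r ^ 2 + r⁻¹ ^ 2 + 2 * Real.cos θ := by
  simp only [Complex.sq_norm, Complex.normSq_apply, Complex.add_re, Complex.add_im,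
    Complex.mul_re, Complex.mul_im, Complex.ofReal_re, Complex.ofReal_im,
    Complex.exp_ofReal_mul_I_re, Complex.exp_ofReal_mul_I_im]
  linear_combination r⁻¹ ^ 2 * Real.sin_sq_add_cos_sq θ + 2 * Real.cos θ * mul_inv_cancel₀ hr

lemma sq_add_inv_sq_add_two_mul_cos_pos {r : ℝ} (hr₀ : r ≠ 0) (hr₁ : r ^ 2 ≠ 1) (θ : ℝ) :
    0 < r ^ 2 + r⁻¹ ^ 2 + 2 * Real.cos θ := by
  have hgap : r - r⁻¹ ≠ 0 := fun h ↦ hr₁ (by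
    linear_combination r * h + mul_inv_cancel₀ hr₀)
  nlinarith [Real.neg_one_le_cos θ, pow_pos (abs_pos.mpr hgap) 2, sq_abs (r - r⁻¹),
    mul_inv_cancel₀ hr₀]

lemma norm_eq_norm_and_norm_ofReal_mul_add_eq_one_iff {r : ℝ} (hr₀ : r ≠ 0) (hr₁ : r ^ 2 ≠ 1)
    (a b : ℂ) :
    (‖a‖ = ‖b‖ ∧ ‖(r : ℂ) * a + ((r⁻¹ : ℝ) : ℂ) * b‖ = 1) ↔
      ∃ θ : ℝ, b = a * Complex.exp (θ * Complex.I) ∧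
        ‖a‖ ^ 2 = (r ^ 2 + r⁻¹ ^ 2 + 2 * Real.cos θ)⁻¹ := by
  have hpolar (θ : ℝ) :
      ‖(r : ℂ) * a + ((r⁻¹ : ℝ) : ℂ) * (a * Complex.exp (θ * Complex.I))‖ ^ 2 =
        ‖a‖ ^ 2 * (r ^ 2 + r⁻¹ ^ 2 + 2 * Real.cos θ) := by
    rw [← norm_ofReal_add_ofReal_inv_mul_exp_sq hr₀, ← mul_pow, ← norm_mul]
    ring_nf
  constructor
  · rintro ⟨hab, hone⟩
    have ha : a ≠ 0 := by
      rintro rfl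
      rw [norm_zero, eq_comm, norm_eq_zero] at hab
      simp [hab] at hone
    obtain ⟨θ, hθ⟩ := (Complex.norm_eq_one_iff (b / a)).mp
      (by rw [norm_div, ← hab, div_self (norm_ne_zero_iff.mpr ha)])
    have hb : b = a * Complex.exp (θ * Complex.I) := by rw [hθ, mul_div_cancel₀ _ ha]
    refine ⟨θ, hb, eq_inv_of_mul_eq_one_left ?_⟩
    rw [← hpolar, ← hb, hone, one_pow]
  · rintro ⟨θ, rfl, ha⟩
    refine ⟨by rw [norm_mul, Complex.norm_exp_ofReal_mul_I, mul_one], ?_⟩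
    rw [← pow_eq_one_iff_of_nonneg (norm_nonneg _) two_ne_zero, hpolar, ha,
      inv_mul_cancel₀ (sq_add_inv_sq_add_two_mul_cos_pos hr₀ hr₁ θ).ne']

open ContinuousLinearMap in
/-- Let `J` be a quantum annulus unitary on a complex Hilbert space `H` with
`‖J‖ = ‖J⁻¹‖ = r`.  For scalars `a, b ∈ ℂ`, the operator `a·J + b·(J*)⁻¹` is unitary if and
only if `|a| = |b|` and `|r·a + r⁻¹·b| = 1`; equivalently, iff there is `θ ∈ ℝ` with
`b = a·e^{iθ}` and `|a|² = (r² + r⁻² + 2 cos θ)⁻¹`. -/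
theorem scalar_combination_unitary_iff
    {H : Type*} [NormedAddCommGroup H] [InnerProductSpace ℂ H] [CompleteSpace H]
    (r : ℝ) (hr : 1 < r) (J : (H →L[ℂ] H)ˣ)
    (hJ : adjoint (J : H →L[ℂ] H) * (J : H →L[ℂ] H) +
        ((J⁻¹ : (H →L[ℂ] H)ˣ) : H →L[ℂ] H) *
          adjoint ((J⁻¹ : (H →L[ℂ] H)ˣ) : H →L[ℂ] H) =
      ((r ^ 2 + r⁻¹ ^ 2 : ℝ) : ℂ) • (1 : H →L[ℂ] H))
    (hJnorm : ‖(J : H →L[ℂ] H)‖ = r)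
    (hJinvnorm : ‖((J⁻¹ : (H →L[ℂ] H)ˣ) : H →L[ℂ] H)‖ = r)
    (a b : ℂ) :
    ((adjoint (a • (J : H →L[ℂ] H) +
          b • adjoint ((J⁻¹ : (H →L[ℂ] H)ˣ) : H →L[ℂ] H)) *
        (a • (J : H →L[ℂ] H) +
          b • adjoint ((J⁻¹ : (H →L[ℂ] H)ˣ) : H →L[ℂ] H)) = 1 ∧
      (a • (J : H →L[ℂ] H) +
          b • adjoint ((J⁻¹ : (H →L[ℂ] H)ˣ) : H →L[ℂ] H)) *
        adjoint (a • (J : H →L[ℂ] H) +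
          b • adjoint ((J⁻¹ : (H →L[ℂ] H)ˣ) : H →L[ℂ] H)) = 1) ↔
      (‖a‖ = ‖b‖ ∧
        ‖(r : ℂ) * a + (r⁻¹ : ℝ) * b‖ = 1)) ∧
    ((‖a‖ = ‖b‖ ∧
        ‖(r : ℂ) * a + (r⁻¹ : ℝ) * b‖ = 1) ↔
      ∃ θ : ℝ, b = a * Complex.exp (θ * Complex.I) ∧
        ‖a‖ ^ 2 = (r ^ 2 + r⁻¹ ^ 2 + 2 * Real.cos θ)⁻¹) := by
  have hr₀ : r ≠ 0 := by positivity
  have hr₁ : r ^ 2 ≠ 1 := (one_lt_pow₀ hr two_ne_zero).ne'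
  simp only [← ContinuousLinearMap.star_eq_adjoint] at hJ ⊢
  exact ⟨smul_add_smul_star_inv_mem_unitary_iff hr hJ hJnorm hJinvnorm a b,
    norm_eq_norm_and_norm_ofReal_mul_add_eq_one_iff hr₀ hr₁ a b⟩
end

section
/- Let r > 1 and suppose a : ℤ → ℂ is such that the Laurent series g(z) = Σ_{n∈ℤ} aₙ zⁿ converges absolutely at every point of the closed annulus Ā_r. Write g(z) = g₁(z) + g₂(1/z) with g₁(z) = Σ_{n≥0} aₙ zⁿ and g₂(w) = Σ_{n≥1} a_{−n} wⁿ. Then for every ξ with |ξ| = r: |g₁(ξ)| ≤ (r²/(r²−1)) · sup_{Ā_r}|g| and |g₂(ξ)| ≤ ((2r²−1)/(r²−1)) · sup_{Ā_r}|g|. -/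
open Complex MeasureTheory intervalIntegral

lemma intExp_integral (k : ℤ) :
    ∫ θ in (0:ℝ)..(2*Real.pi), Complex.exp (k * θ * Complex.I)
      = if k = 0 then (2*Real.pi : ℂ) else 0 := by
  rcases eq_or_ne k 0 with h | h
  · simp [h]
  · have hc : (k : ℂ) * Complex.I ≠ 0 := by
      simp [h, Complex.I_ne_zero]
    have hrw : ∀ θ : ℝ, (k:ℂ) * θ * Complex.I = ((k:ℂ)*Complex.I) * θ := fun θ => by ring
    simp only [hrw]
    rw [integral_exp_mul_complex hc, if_neg h]
    have h1 : (k:ℂ)*Complex.I*((2*Real.pi:ℝ):ℂ) = (k:ℂ) * (2*(Real.pi:ℂ)*Complex.I) := by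
      push_cast; ring
    rw [h1, Complex.exp_int_mul_two_pi_mul_I]
    simp

lemma coeff_bound (a : ℤ → ℂ) (ρ M : ℝ) (hρ : 0 < ρ)
    (hs : Summable fun m : ℤ => ‖a m‖ * ρ ^ m)
    (hM : ∀ θ : ℝ, ‖∑' m : ℤ, a m * ((ρ:ℂ) * Complex.exp (θ * Complex.I)) ^ m‖ ≤ M)
    (n : ℤ) : ‖a n‖ * ρ ^ n ≤ M := by
  set z : ℝ → ℂ := fun θ => (ρ:ℂ) * Complex.exp (θ * Complex.I) with hz_def
  have hz : ∀ θ : ℝ, z θ ≠ 0 := fun θ =>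
    mul_ne_zero (by exact_mod_cast hρ.ne') (Complex.exp_ne_zero _)
  have hznorm : ∀ θ : ℝ, ‖z θ‖ = ρ := by
    intro θ
    simp [hz_def, Complex.norm_exp_ofReal_mul_I, abs_of_pos hρ]
  have hcont : ∀ m : ℤ, Continuous fun θ : ℝ =>
      a m * (z θ)^m * Complex.exp (-(n:ℂ) * θ * Complex.I) := by
    intro m
    apply Continuous.mul
    · apply continuous_const.mul
      exact (continuous_const.mul ((Complex.continuous_ofReal.mul continuous_const).cexp)).zpow₀
        m (fun θ => Or.inl (hz θ))
    · exact ((continuous_const.mul Complex.continuous_ofReal).mul continuous_const).cexp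
  set F : ℤ → C(ℝ, ℂ) := fun m =>
    ⟨fun θ => a m * (z θ)^m * Complex.exp (-(n:ℂ) * θ * Complex.I), hcont m⟩ with hF_def
  have hexpnorm : ∀ θ : ℝ, ‖Complex.exp (-(n:ℂ) * θ * Complex.I)‖ = 1 := by
    intro θ
    have : (-(n:ℂ)) * θ * Complex.I = (((-n * θ : ℝ)):ℂ) * Complex.I := by push_cast; ring
    rw [this, Complex.norm_exp_ofReal_mul_I]
  have hFnorm : ∀ m θ, ‖F m θ‖ = ‖a m‖ * ρ ^ m := by
    intro m θ
    simp only [hF_def, ContinuousMap.coe_mk, norm_mul, norm_zpow, hznorm, hexpnorm, mul_one]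
  have hsumnorm : Summable fun m : ℤ =>
      ‖(F m).restrict (⟨Set.uIcc 0 (2*Real.pi), isCompact_uIcc⟩ : TopologicalSpace.Compacts ℝ)‖ := by
    apply Summable.of_nonneg_of_le (fun m => norm_nonneg _) _ hs
    intro m
    rw [ContinuousMap.norm_le _ (mul_nonneg (norm_nonneg _) (zpow_nonneg hρ.le m))]
    rintro ⟨x, hx⟩
    rw [ContinuousMap.restrict_apply]
    exact (hFnorm m x).le
  have heq := intervalIntegral.tsum_intervalIntegral_eq_of_summable_norm (a := 0)
    (b := 2*Real.pi) hsumnorm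
  -- compute LHS
  have hLHS : ∀ m : ℤ, (∫ θ in (0:ℝ)..(2*Real.pi), F m θ)
      = a m * (ρ:ℂ)^m * (if m = n then (2*Real.pi : ℂ) else 0) := by
    intro m
    have hint : ∀ θ : ℝ, F m θ = a m * (ρ:ℂ)^m * Complex.exp (((m - n : ℤ):ℂ) * θ * Complex.I) := by
      intro θ
      simp only [hF_def, ContinuousMap.coe_mk, hz_def]
      rw [mul_zpow, ← Complex.exp_int_mul, ← mul_assoc, mul_assoc, ← Complex.exp_add]
      congr 1
      push_cast
      ring
    simp only [hint]
    rw [intervalIntegral.integral_const_mul, intExp_integral (m - n)]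
    simp only [sub_eq_zero]
  simp only [hLHS] at heq
  have htsum : (∑' m : ℤ, a m * (ρ:ℂ)^m * (if m = n then (2*Real.pi : ℂ) else 0))
      = a n * (ρ:ℂ)^n * (2*Real.pi : ℂ) := by
    rw [tsum_eq_single n]
    · simp
    · intro m hm; simp [hm]
  have hbound : ‖∫ θ in (0:ℝ)..(2*Real.pi), ∑' m : ℤ, F m θ‖ ≤ M * |2*Real.pi - 0| := by
    apply intervalIntegral.norm_integral_le_of_norm_le_const
    intro θ _
    have hfac : (∑' m : ℤ, F m θ)
        = (∑' m : ℤ, a m * (z θ)^m) * Complex.exp (-(n:ℂ)*θ*Complex.I) := by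
      rw [← tsum_mul_right]
      rfl
    rw [hfac, norm_mul, hexpnorm, mul_one]
    exact hM θ
  have key : ‖a n * (ρ:ℂ)^n * (2*Real.pi : ℂ)‖ ≤ M * |2*Real.pi - 0| := by
    rw [← htsum, heq]
    exact hbound
  have hpi : (0:ℝ) < 2*Real.pi := by positivity
  have hnorm2 : ‖a n * (ρ:ℂ)^n * (2*Real.pi : ℂ)‖ = (‖a n‖ * ρ^n) * (2*Real.pi) := by
    rw [norm_mul, norm_mul, norm_zpow, Complex.norm_real]
    simp [abs_of_pos hρ, abs_of_pos Real.pi_pos, Real.pi_pos.le]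
  rw [hnorm2, sub_zero, abs_of_pos hpi] at key
  exact le_of_mul_le_mul_right key hpi

lemma div_trick {c t M' : ℝ} (ht : 0 < t) (h : c * t ≤ M') : c * t⁻¹ ≤ M' * (t^2)⁻¹ := by
  have he : c * t⁻¹ = (c * t) * (t^2)⁻¹ := by
    field_simp
  rw [he]
  exact mul_le_mul_of_nonneg_right h (by positivity)


/-- Let `r > 1` and let `g(z) = Σ_{n∈ℤ} aₙ zⁿ` be an absolutely convergent
Laurent series on the closed annulus `Ā_r = {1/r ≤ |z| ≤ r}`.  Writing
`g = g₁(z) + g₂(1/z)` with `g₁(z) = Σ_{n≥0} aₙ zⁿ`, `g₂(w) = Σ_{n≥1} a₋ₙ wⁿ`, one has for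
every `ξ` with `|ξ| = r`:
`|g₁(ξ)| ≤ (r²/(r²−1))·sup_{Ā_r}|g|` and `|g₂(ξ)| ≤ ((2r²−1)/(r²−1))·sup_{Ā_r}|g|`. -/
theorem annulus_laurent_split_bounds
    (r : ℝ) (hr : 1 < r) (a : ℤ → ℂ)
    (hsum : ∀ z : ℂ, 1 / r ≤ ‖z‖ → ‖z‖ ≤ r →
      Summable fun n : ℤ => ‖a n * z ^ n‖) :
    ∀ ξ : ℂ, ‖ξ‖ = r →
      ‖∑' n : ℕ, a (n : ℤ) * ξ ^ n‖ ≤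
        (r ^ 2 / (r ^ 2 - 1)) *
          sSup ((fun z : ℂ => ‖∑' n : ℤ, a n * z ^ n‖) ''
            {z : ℂ | 1 / r ≤ ‖z‖ ∧ ‖z‖ ≤ r}) ∧
      ‖∑' n : ℕ, a (-((n : ℤ) + 1)) * ξ ^ (n + 1)‖ ≤
        ((2 * r ^ 2 - 1) / (r ^ 2 - 1)) *
          sSup ((fun z : ℂ => ‖∑' n : ℤ, a n * z ^ n‖) ''
            {z : ℂ | 1 / r ≤ ‖z‖ ∧ ‖z‖ ≤ r}) := by
  intro ξ hξ
  have hr0 : (0:ℝ) < r := lt_trans one_pos hr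
  have hrinv0 : (0:ℝ) < 1/r := by positivity
  have hr1r : 1/r ≤ r := by
    rw [div_le_iff₀ hr0]; nlinarith
  set S : Set ℂ := {z : ℂ | 1 / r ≤ ‖z‖ ∧ ‖z‖ ≤ r} with hS_def
  set M : ℝ := sSup ((fun z : ℂ => ‖∑' n : ℤ, a n * z ^ n‖) '' S) with hM_def
  have hnormpt : ∀ ρ : ℝ, 0 < ρ → ∀ n : ℤ, ‖a n * ((ρ:ℂ)) ^ n‖ = ‖a n‖ * ρ ^ n := by
    intro ρ hρ n
    rw [norm_mul, norm_zpow, Complex.norm_real, Real.norm_eq_abs, abs_of_pos hρ]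
  have hnr : ∀ ρ : ℝ, 0 < ρ → ‖((ρ:ℝ):ℂ)‖ = ρ := fun ρ h => by
    rw [Complex.norm_real, Real.norm_eq_abs, abs_of_pos h]
  have hBdd : BddAbove ((fun z : ℂ => ‖∑' n : ℤ, a n * z ^ n‖) '' S) := by
    refine ⟨(∑' n : ℤ, (‖a n * ((r:ℝ):ℂ) ^ n‖ + ‖a n * (((1/r : ℝ)):ℂ) ^ n‖)), ?_⟩
    rintro x ⟨z, hz, rfl⟩
    obtain ⟨hz1, hz2⟩ := hz
    have hz0 : (0:ℝ) < ‖z‖ := lt_of_lt_of_le hrinv0 hz1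
    have hsz := hsum z hz1 hz2
    have hsr := hsum ((r:ℝ):ℂ) (by rw [hnr r hr0]; exact hr1r) (hnr r hr0).le
    have hsi := hsum (((1/r:ℝ)):ℂ) (le_of_eq (hnr _ hrinv0).symm)
      (by rw [hnr _ hrinv0]; exact hr1r)
    refine le_trans (norm_tsum_le_tsum_norm hsz)
      (Summable.tsum_le_tsum ?_ hsz ((hsr.congr (fun n => rfl)).add (hsi.congr (fun n => rfl))))
    intro n
    rw [hnormpt r hr0, hnormpt (1/r) hrinv0, norm_mul, norm_zpow, ← mul_add]
    refine mul_le_mul_of_nonneg_left ?_ (norm_nonneg _)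
    obtain ⟨k, rfl | rfl⟩ := Int.eq_nat_or_neg n
    · have h1 : ‖z‖ ^ (k:ℤ) ≤ r ^ (k:ℤ) := by
        rw [zpow_natCast, zpow_natCast]
        exact pow_le_pow_left₀ hz0.le hz2 k
      have h2 : (0:ℝ) ≤ (1/r) ^ (k:ℤ) := zpow_nonneg hrinv0.le _
      linarith
    · have h1 : ‖z‖ ^ (-(k:ℤ)) ≤ (1/r) ^ (-(k:ℤ)) := by
        rw [zpow_neg, zpow_neg, zpow_natCast, zpow_natCast, ← inv_pow, ← inv_pow]
        refine pow_le_pow_left₀ (by positivity) ?_ k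
        calc ‖z‖⁻¹ ≤ (1/r)⁻¹ := inv_anti₀ hrinv0 hz1
        _ = (1/r)⁻¹ := rfl
      have h2 : (0:ℝ) ≤ r ^ (-(k:ℤ)) := zpow_nonneg hr0.le _
      linarith
  have hle : ∀ z : ℂ, z ∈ S → ‖∑' n : ℤ, a n * z ^ n‖ ≤ M :=
    fun z hz => le_csSup hBdd ⟨z, hz, rfl⟩
  have hcoeff : ∀ ρ : ℝ, 0 < ρ → 1/r ≤ ρ → ρ ≤ r → ∀ n : ℤ, ‖a n‖ * ρ ^ n ≤ M := by
    intro ρ hρ hρ1 hρ2 n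
    refine coeff_bound a ρ M hρ ?_ ?_ n
    · exact ((hsum ((ρ:ℝ):ℂ) (by rw [hnr ρ hρ]; exact hρ1) (by rw [hnr ρ hρ]; exact hρ2)).congr
        (fun m => hnormpt ρ hρ m))
    · intro θ
      refine hle _ ?_
      have hn : ‖(ρ:ℂ) * Complex.exp ((θ:ℂ) * Complex.I)‖ = ρ := by
        simp [Complex.norm_exp_ofReal_mul_I, abs_of_pos hρ]
      exact ⟨by rw [hn]; exact hρ1, by rw [hn]; exact hρ2⟩
  have h_r : ∀ n : ℤ, ‖a n‖ * r ^ n ≤ M := hcoeff r hr0 hr1r le_rfl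
  have h_inv : ∀ n : ℤ, ‖a n‖ * (1/r) ^ n ≤ M := hcoeff (1/r) hrinv0 le_rfl hr1r
  set x : ℝ := (r^2)⁻¹ with hx_def
  have hx0 : (0:ℝ) ≤ x := by positivity
  have hx1 : x < 1 := by
    rw [hx_def]
    rw [inv_lt_one_iff₀]
    right; nlinarith
  have h1x : (0:ℝ) < 1 - x := by linarith
  have hr21 : r^2 - 1 ≠ 0 := by nlinarith
  have hξ0 : ξ ≠ 0 := by
    intro h
    rw [h, norm_zero] at hξ
    exact hr0.ne hξ
  have hξinv : ‖ξ⁻¹‖ = 1/r := by rw [norm_inv, hξ, one_div]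
  have hξS : ξ ∈ S := ⟨by rw [hξ]; exact hr1r, le_of_eq hξ⟩
  have hwS : ξ⁻¹ ∈ S := ⟨le_of_eq hξinv.symm, by rw [hξinv]; exact hr1r⟩
  have Sξ := hsum ξ hξS.1 hξS.2
  have Sw := hsum ξ⁻¹ hwS.1 hwS.2
  have hinj : Function.Injective (fun n : ℕ => -((n:ℤ)+1)) := by
    intro m n h
    simp only [] at h
    omega
  have hsplitξ : (∑' n : ℤ, a n * ξ ^ n)
      = (∑' n : ℕ, a (n:ℤ) * ξ ^ ((n:ℤ))) + ∑' n : ℕ, a (-((n:ℤ)+1)) * ξ ^ (-((n:ℤ)+1)) :=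
    tsum_of_nat_of_neg_add_one (Sξ.of_norm.comp_injective Nat.cast_injective)
      (Sξ.of_norm.comp_injective hinj)
  have hg1 : (∑' n : ℕ, a (n:ℤ) * ξ ^ ((n:ℤ))) = ∑' n : ℕ, a (n:ℤ) * ξ ^ n :=
    tsum_congr fun n => by rw [zpow_natCast]
  have hterm1 : ∀ n : ℕ, ‖a (-((n:ℤ)+1)) * ξ ^ (-((n:ℤ)+1))‖ ≤ M * x ^ (n+1) := by
    intro n
    have hc : -((n:ℤ)+1) = -(((n+1:ℕ)):ℤ) := by push_cast; ring
    have hxp : x ^ (n+1) = ((r ^ (n+1))^2)⁻¹ := by rw [hx_def, ← inv_pow, pow_right_comm, inv_pow, inv_pow]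
    have hnorm : ‖a (-((n:ℤ)+1)) * ξ ^ (-((n:ℤ)+1))‖ = ‖a (-((n:ℤ)+1))‖ * (r ^ (n+1))⁻¹ := by
      rw [norm_mul, hc, zpow_neg, norm_inv, norm_zpow, hξ, zpow_natCast]
    have hb := h_inv (-((n:ℤ)+1))
    have hpow : (1/r : ℝ) ^ (-((n:ℤ)+1)) = r ^ (n+1) := by
      rw [hc, zpow_neg, one_div, inv_zpow, inv_inv, zpow_natCast]
    rw [hpow] at hb
    rw [hnorm, hxp]
    exact div_trick (by positivity) hb
  have hgeos : Summable fun n : ℕ => M * x ^ (n+1) := by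
    refine ((summable_geometric_of_lt_one hx0 hx1).mul_left (M * x)).congr fun n => ?_
    rw [pow_succ]; ring
  have hgeoval : (∑' n : ℕ, M * x ^ (n+1)) = M * x * (1-x)⁻¹ := by
    rw [← tsum_geometric_of_lt_one hx0 hx1, ← tsum_mul_left]
    exact tsum_congr fun n => by rw [pow_succ]; ring
  have hN : ‖∑' n : ℕ, a (-((n:ℤ)+1)) * ξ ^ (-((n:ℤ)+1))‖ ≤ M * x * (1-x)⁻¹ := by
    refine le_trans (norm_tsum_le_tsum_norm (Sξ.comp_injective hinj)) ?_
    rw [← hgeoval]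
    exact Summable.tsum_le_tsum hterm1 (Sξ.comp_injective hinj) hgeos
  constructor
  · have hrw : (∑' n : ℕ, a (n:ℤ) * ξ ^ n)
        = (∑' n : ℤ, a n * ξ ^ n) - ∑' n : ℕ, a (-((n:ℤ)+1)) * ξ ^ (-((n:ℤ)+1)) := by
      rw [hsplitξ, ← hg1]; ring
    rw [hrw]
    refine le_trans (norm_sub_le _ _) ?_
    have h1 := hle ξ hξS
    have heqfinal : M + M * x * (1-x)⁻¹ = r^2/(r^2-1) * M := by
      rw [hx_def]
      field_simp
      ring
    linarith
  · have hsplitw : (∑' n : ℤ, a n * ξ⁻¹ ^ n)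
        = (∑' n : ℕ, a (n:ℤ) * ξ⁻¹ ^ ((n:ℤ))) + ∑' n : ℕ, a (-((n:ℤ)+1)) * ξ⁻¹ ^ (-((n:ℤ)+1)) :=
      tsum_of_nat_of_neg_add_one (Sw.of_norm.comp_injective Nat.cast_injective)
        (Sw.of_norm.comp_injective hinj)
    have hw2 : (∑' n : ℕ, a (-((n:ℤ)+1)) * ξ⁻¹ ^ (-((n:ℤ)+1)))
        = ∑' n : ℕ, a (-((n:ℤ)+1)) * ξ ^ (n+1) :=
      tsum_congr fun n => by
        congr 1
        rw [zpow_neg, inv_zpow, inv_inv]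
        have hc : ((n:ℤ)+1) = (((n+1:ℕ)):ℤ) := by push_cast; ring
        rw [hc, zpow_natCast]
    have hterm2 : ∀ n : ℕ, ‖a (n:ℤ) * ξ⁻¹ ^ ((n:ℤ))‖ ≤ M * x ^ n := by
      intro n
      have hnorm : ‖a (n:ℤ) * ξ⁻¹ ^ ((n:ℤ))‖ = ‖a (n:ℤ)‖ * (r ^ n)⁻¹ := by
        rw [norm_mul, norm_zpow, hξinv, zpow_natCast, one_div, inv_pow]
      have hb := h_r (n:ℤ)
      rw [zpow_natCast] at hb
      have hxp : x ^ n = ((r^n)^2)⁻¹ := by rw [hx_def, ← inv_pow, pow_right_comm, inv_pow, inv_pow]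
      rw [hnorm, hxp]
      exact div_trick (by positivity) hb
    have hg2eq : (∑' n : ℕ, a (-((n:ℤ)+1)) * ξ ^ (n+1))
        = (∑' n : ℤ, a n * ξ⁻¹ ^ n) - ∑' n : ℕ, a (n:ℤ) * ξ⁻¹ ^ ((n:ℤ)) := by
      rw [hsplitw, ← hw2]; ring
    rw [hg2eq]
    refine le_trans (norm_sub_le _ _) ?_
    have h1 := hle ξ⁻¹ hwS
    have h2 : ‖∑' n : ℕ, a (n:ℤ) * ξ⁻¹ ^ ((n:ℤ))‖ ≤ M * (1-x)⁻¹ := by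
      refine le_trans (norm_tsum_le_tsum_norm (Sw.comp_injective Nat.cast_injective)) ?_
      have hval : (∑' n : ℕ, M * x ^ n) = M * (1-x)⁻¹ := by
        rw [tsum_mul_left, tsum_geometric_of_lt_one hx0 hx1]
      rw [← hval]
      exact Summable.tsum_le_tsum hterm2 (Sw.comp_injective Nat.cast_injective)
        ((summable_geometric_of_lt_one hx0 hx1).mul_left M)
    have heqfinal : M + M * (1-x)⁻¹ = (2*r^2-1)/(r^2-1) * M := by
      rw [hx_def]
      field_simp
      ring
    linarith
end

section
/- Let r > 1 and suppose a : ℤ² → ℂ is such that the double Laurent series g(z₁, z₂) = Σ_{n,m∈ℤ} a_{n,m} z₁ⁿ z₂ᵐ converges absolutely at every point of the closed biannulus Ā_r². Define g₁(z₁,z₂) = Σ_{n≥0, m≥0} a_{n,m} z₁ⁿ z₂ᵐ, g₂(z₁,w₂) = Σ_{n≥0, m≥1} a_{n,−m} z₁ⁿ w₂ᵐ, g₃(w₁,z₂) = Σ_{n≥1, m≥0} a_{−n,m} w₁ⁿ z₂ᵐ, and g₄(w₁,w₂) = Σ_{n≥1, m≥1} a_{−n,−m} w₁ⁿ w₂ᵐ.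 Then, with ‖g‖ = sup_{Ā_r²}|g| and all left-hand suprema taken over {|·| = r} × {|·| = r}: ‖g₁‖ ≤ (r²/(r²−1))² · ‖g‖; ‖g₂‖ ≤ (r²/(r²−1))·((2r²−1)/(r²−1)) · ‖g‖; ‖g₃‖ ≤ (r²/(r²−1))·((2r²−1)/(r²−1)) · ‖g‖; and ‖g₄‖ ≤ ((2r²−1)/(r²−1))² · ‖g‖. -/
/-!
Cauchy's estimate on the circles `|z| = r` and `|z| = 1/r` shows that the coefficients of a
one-variable Laurent series bounded by `C` on the closed annulus satisfy `|c_k| ≤ C r^(-|k|)`.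
On `|z| = r` the principal part is therefore at most `C ∑_{k ≥ 1} r^(-2k) = C / (r² - 1)`, so the
regular part, being the series minus its principal part, is at most `C r² / (r² - 1)`. On
`|z| = 1/r` the regular part is at most `C ∑_{k ≥ 0} r^(-2k) = C r² / (r² - 1)`, hence the
principal part is at most `C (2r² - 1) / (r² - 1)`. Applying this first in `z₁`, with `z₂` in the
annulus as a parameter, and then in `z₂`, with `z₁` fixed on a boundary circle, bounds each of the
four corner series by the product of the two corresponding constants.
-/

open Complex Set Function
open scoped Real

theorem one_div_le_self_of_one_le {r : ℝ} (hr : 1 ≤ r) : 1 / r ≤ r :=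
  ((div_le_one (by linarith)).2 hr).trans hr

theorem zpow_le_zpow_add_one_div_zpow {r x : ℝ} (hx : 0 < x) (h₁ : 1 / r ≤ x) (h₂ : x ≤ r)
    (n : ℤ) : x ^ n ≤ r ^ n + (1 / r) ^ n := by
  have hr : 0 < r := hx.trans_le h₂
  rcases le_or_gt 0 n with hn | hn
  · exact (zpow_le_zpow_left₀ hn hx.le h₂).trans (le_add_of_nonneg_right (by positivity))
  · refine le_add_of_nonneg_of_le (by positivity) ?_
    calc x ^ n = x⁻¹ ^ (-n) := by rw [inv_zpow', neg_neg]
      _ ≤ r ^ (-n) := zpow_le_zpow_left₀ (by omega) (by positivity)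
          ((inv_le_comm₀ hx hr).2 (by rwa [one_div] at h₁))
      _ = (1 / r) ^ n := by rw [one_div, inv_zpow']

theorem mul_inv_pow_le_of_mul_pow_le {A C ρ : ℝ} (hρ : 0 < ρ) {n : ℕ} (h : A * ρ ^ n ≤ C) :
    A * ρ⁻¹ ^ n ≤ C * (ρ ^ 2)⁻¹ ^ n := by
  calc A * ρ⁻¹ ^ n = A * ρ ^ n * (ρ ^ 2)⁻¹ ^ n := by
        rw [mul_assoc, ← mul_pow, sq, mul_inv, ← mul_assoc, mul_inv_cancel₀ hρ.ne', one_mul]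
    _ ≤ C * (ρ ^ 2)⁻¹ ^ n := by gcongr

theorem injective_neg_natCast_add_one : Injective fun n : ℕ => -((n : ℤ) + 1) :=
  fun m n h => by simpa using h

theorem range_neg_natCast_add_one : range (fun n : ℕ => -((n : ℤ) + 1)) = Iio 0 := by
  ext k
  simp only [mem_range, mem_Iio]
  refine ⟨fun ⟨n, hn⟩ => by omega, fun hk => ⟨(-k - 1).toNat, by omega⟩⟩

theorem tsum_indicator_range {ι β M : Type*} [AddCommMonoid M] [TopologicalSpace M] {i : ι → β}
    (hi : Injective i) (f : β → M) :
    ∑' b, (range i).indicator f b = ∑' n, f (i n) := by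
  rw [← hi.tsum_eq support_indicator_subset]
  exact tsum_congr fun n => indicator_of_mem (mem_range_self n) f

theorem indicator_prod_comp_swap {α β M : Type*} [Zero M] (f : α × β → M) (s : Set α)
    (t : Set β) : (s ×ˢ t).indicator f ∘ Prod.swap = (t ×ˢ s).indicator (f ∘ Prod.swap) := by
  ext p
  rw [Function.comp_apply, ← indicator_comp_right, preimage_swap_prod]

theorem inv_zpow_neg_natCast_add_one {G₀ : Type*} [GroupWithZero G₀] (z : G₀) (n : ℕ) :
    z⁻¹ ^ (-((n : ℤ) + 1)) = z ^ (n + 1) := by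
  rw [zpow_neg, inv_zpow, inv_inv]; norm_cast

theorem integral_exp_int_mul_I_eq_zero {j : ℤ} (hj : j ≠ 0) :
    ∫ θ in (0 : ℝ)..2 * π, exp (j * I * θ) = 0 := by
  have hjI : (j : ℂ) * I ≠ 0 := mul_ne_zero (Int.cast_ne_zero.2 hj) I_ne_zero
  have hper : exp (j * I * ↑(2 * π)) = 1 := by
    rw [← exp_int_mul_two_pi_mul_I j]; push_cast; ring_nf
  rw [integral_exp_mul_complex hjI, hper, ofReal_zero, mul_zero, Complex.exp_zero, sub_self,
    zero_div]

theorem hasSum_coeff_mul_exp {c : ℤ → ℂ} {ρ : ℝ} (hρ : 0 < ρ)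
    (hs : Summable fun k => ‖c k‖ * ρ ^ k) (n : ℤ) (θ : ℝ) :
    HasSum (fun k => c k * ρ ^ k * exp ((k - n : ℤ) * I * θ))
      ((∑' k, c k * (ρ * exp (θ * I)) ^ k) * exp (-(n * I * θ))) := by
  have hsum : Summable fun k => c k * (ρ * exp (θ * I)) ^ k :=
    .of_norm (by simpa [norm_mul, norm_zpow, abs_of_pos hρ] using hs)
  have hterm : (fun k => c k * ρ ^ k * exp ((k - n : ℤ) * I * θ)) =
      fun k => c k * (ρ * exp (θ * I)) ^ k * exp (-(n * I * θ)) := by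
    ext k
    simp only [mul_zpow, ← exp_int_mul, mul_assoc, ← Complex.exp_add]
    push_cast; ring_nf
  rw [hterm]
  exact hsum.hasSum.mul_right _

/-- Cauchy's estimate, obtained by integrating the series against `exp (-i n θ)` over the
circle of radius `ρ`. -/
theorem norm_coeff_mul_zpow_le {c : ℤ → ℂ} {ρ C : ℝ} (hρ : 0 < ρ)
    (hs : Summable fun k => ‖c k‖ * ρ ^ k)
    (hb : ∀ z : ℂ, ‖z‖ = ρ → ‖∑' k, c k * z ^ k‖ ≤ C) (n : ℤ) :
    ‖c n‖ * ρ ^ n ≤ C := by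
  set F : ℤ → ℝ → ℂ := fun k θ => c k * ρ ^ k * exp ((k - n : ℤ) * I * θ) with hF
  set f : ℝ → ℂ := fun θ => (∑' k, c k * (ρ * exp (θ * I)) ^ k) * exp (-(n * I * θ)) with hf
  have hinteg : HasSum (fun k => ∫ θ in (0 : ℝ)..2 * π, F k θ) (∫ θ in (0 : ℝ)..2 * π, f θ) :=
    intervalIntegral.hasSum_integral_of_dominated_convergence (fun k _ => ‖c k‖ * ρ ^ k)
      (fun k => (by fun_prop : Continuous (F k)).aestronglyMeasurable)
      (fun k => .of_forall fun θ _ => by simp [hF, norm_exp, abs_of_pos hρ])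
      (.of_forall fun _ _ => hs) intervalIntegrable_const
      (.of_forall fun θ _ => hasSum_coeff_mul_exp hρ hs n θ)
  have hcoeff : HasSum (fun k => ∫ θ in (0 : ℝ)..2 * π, F k θ) (2 * π * (c n * ρ ^ n)) := by
    convert hasSum_ite_eq n ((2 * π : ℂ) * (c n * ρ ^ n)) using 1
    ext k
    split_ifs with hk
    · simp [hF, hk]; ring
    · rw [hF, intervalIntegral.integral_const_mul,
        integral_exp_int_mul_I_eq_zero (sub_ne_zero.2 hk), mul_zero]
  have hbound : ‖∫ θ in (0 : ℝ)..2 * π, f θ‖ ≤ C * |2 * π - 0| :=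
    intervalIntegral.norm_integral_le_of_norm_le_const fun θ _ => by
      rw [hf, norm_mul, show -(n * I * θ) = ((-n * θ : ℝ) : ℂ) * I by push_cast; ring,
        norm_exp_ofReal_mul_I, mul_one]
      exact hb _ (by simp [abs_of_pos hρ])
  rw [hinteg.unique hcoeff, sub_zero, abs_of_pos (by positivity)] at hbound
  have hnorm : ‖(2 * π : ℂ) * (c n * ρ ^ n)‖ = 2 * π * (‖c n‖ * ρ ^ n) := by
    simp [abs_of_pos hρ, abs_of_pos Real.pi_pos]
  rw [hnorm, mul_comm C] at hbound
  exact le_of_mul_le_mul_left hbound (by positivity)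

def closedAnnulus (r : ℝ) : Set ℂ := {z : ℂ | 1 / r ≤ ‖z‖ ∧ ‖z‖ ≤ r}

noncomputable def regularPart {α : Type*} [Zero α] (c : ℤ → α) : ℤ → α := (Ici 0).indicator c

noncomputable def principalPart {α : Type*} [Zero α] (c : ℤ → α) : ℤ → α := (Iio 0).indicator c

theorem mem_closedAnnulus_of_norm_eq {r : ℝ} (hr : 1 ≤ r) {z : ℂ} (hz : ‖z‖ = r) :
    z ∈ closedAnnulus r :=
  ⟨by rw [hz]; exact one_div_le_self_of_one_le hr, hz.le⟩

theorem mem_closedAnnulus_of_norm_eq_inv {r : ℝ} (hr : 1 ≤ r) {z : ℂ} (hz : ‖z‖ = 1 / r) :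
    z ∈ closedAnnulus r :=
  ⟨hz.ge, by rw [hz]; exact one_div_le_self_of_one_le hr⟩

theorem tsum_regularPart_mul_zpow (c : ℤ → ℂ) (z : ℂ) :
    ∑' k, regularPart c k * z ^ k = ∑' n : ℕ, c n * z ^ n := by
  simp_rw [regularPart, ← indicator_mul_left, ← Nat.range_cast_int,
    tsum_indicator_range Nat.cast_injective, zpow_natCast]

theorem tsum_principalPart_mul_zpow (c : ℤ → ℂ) (z : ℂ) :
    ∑' k, principalPart c k * z ^ k = ∑' n : ℕ, c (-(n + 1)) * z⁻¹ ^ (n + 1) := by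
  simp_rw [principalPart, ← indicator_mul_left, ← range_neg_natCast_add_one,
    tsum_indicator_range injective_neg_natCast_add_one, zpow_neg, ← inv_zpow]
  norm_cast

section OneVariable

variable {r C : ℝ} {c : ℤ → ℂ}

theorem norm_coeff_mul_zpow_le_of_annulus
    (hs : ∀ z ∈ closedAnnulus r, Summable fun k => ‖c k * z ^ k‖)
    (hb : ∀ z ∈ closedAnnulus r, ‖∑' k, c k * z ^ k‖ ≤ C)
    {ρ : ℝ} (hρ : 0 < ρ) (hρ₁ : 1 / r ≤ ρ) (hρ₂ : ρ ≤ r) (n : ℤ) :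
    ‖c n‖ * ρ ^ n ≤ C := by
  have hρc : ‖(ρ : ℂ)‖ = ρ := by simp [abs_of_pos hρ]
  refine norm_coeff_mul_zpow_le hρ ?_ (fun z hz => hb z ⟨hz ▸ hρ₁, hz ▸ hρ₂⟩) n
  simpa [norm_mul, norm_zpow, abs_of_pos hρ] using hs ρ ⟨hρc.symm ▸ hρ₁, hρc.symm ▸ hρ₂⟩

theorem tsum_regularPart_add_tsum_principalPart {z : ℂ}
    (h : Summable fun k => ‖c k * z ^ k‖) :
    ∑' k, regularPart c k * z ^ k + ∑' k, principalPart c k * z ^ k = ∑' k, c k * z ^ k := by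
  have hsummable (s : Set ℤ) : Summable fun k => s.indicator c k * z ^ k :=
    .of_norm_bounded h fun k => by
      rw [norm_mul, norm_mul]; gcongr; exact norm_indicator_le_norm_self c k
  rw [regularPart, principalPart, ← (hsummable _).tsum_add (hsummable _)]
  refine tsum_congr fun k => ?_
  rw [← add_mul, ← compl_Ici, indicator_self_add_compl_apply]

variable (hr : 1 < r) (hs : ∀ z ∈ closedAnnulus r, Summable fun k => ‖c k * z ^ k‖)
  (hb : ∀ z ∈ closedAnnulus r, ‖∑' k, c k * z ^ k‖ ≤ C)
include hr hs hb

theorem norm_tsum_regularPart_le_of_norm_eq_inv {z : ℂ} (hz : ‖z‖ = 1 / r) :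
    ‖∑' k, regularPart c k * z ^ k‖ ≤ C * (r ^ 2 / (r ^ 2 - 1)) := by
  have hr₀ : 0 < r := by linarith
  have hq : (r ^ 2)⁻¹ < 1 := inv_lt_one_of_one_lt₀ (by nlinarith)
  rw [tsum_regularPart_mul_zpow]
  refine (tsum_of_norm_bounded ((hasSum_geometric_of_lt_one (by positivity) hq).mul_left C)
    fun n => ?_).trans_eq ?_
  · rw [norm_mul, norm_pow, hz, one_div]
    refine mul_inv_pow_le_of_mul_pow_le hr₀ ?_
    exact_mod_cast norm_coeff_mul_zpow_le_of_annulus hs hb hr₀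
      (one_div_le_self_of_one_le hr.le) le_rfl n
  · field_simp

theorem norm_tsum_principalPart_le_of_norm_eq {z : ℂ} (hz : ‖z‖ = r) :
    ‖∑' k, principalPart c k * z ^ k‖ ≤ C / (r ^ 2 - 1) := by
  have hr₀ : 0 < r := by linarith
  have hq : (r ^ 2)⁻¹ < 1 := inv_lt_one_of_one_lt₀ (by nlinarith)
  rw [tsum_principalPart_mul_zpow]
  refine (tsum_of_norm_bounded ((hasSum_geometric_of_lt_one (by positivity) hq).mul_left
    (C * (r ^ 2)⁻¹)) fun n => ?_).trans_eq ?_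
  · rw [norm_mul, norm_pow, norm_inv, hz, mul_assoc, ← pow_succ']
    refine mul_inv_pow_le_of_mul_pow_le hr₀ ?_
    have h := norm_coeff_mul_zpow_le_of_annulus hs hb (by positivity) le_rfl
      (one_div_le_self_of_one_le hr.le) (-(n + 1))
    rwa [one_div, inv_zpow, zpow_neg, inv_inv, ← Nat.cast_succ, zpow_natCast] at h
  · have : r ^ 2 - 1 ≠ 0 := by nlinarith
    field_simp

theorem norm_tsum_regularPart_le_of_norm_eq {z : ℂ} (hz : ‖z‖ = r) :
    ‖∑' k, regularPart c k * z ^ k‖ ≤ C * (r ^ 2 / (r ^ 2 - 1)) := by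
  have hz' := mem_closedAnnulus_of_norm_eq hr.le hz
  rw [eq_sub_of_add_eq (tsum_regularPart_add_tsum_principalPart (hs z hz'))]
  refine (norm_sub_le _ _).trans ((add_le_add (hb z hz')
    (norm_tsum_principalPart_le_of_norm_eq hr hs hb hz)).trans_eq ?_)
  have : r ^ 2 - 1 ≠ 0 := by nlinarith
  field_simp; ring

theorem norm_tsum_principalPart_le_of_norm_eq_inv {z : ℂ} (hz : ‖z‖ = 1 / r) :
    ‖∑' k, principalPart c k * z ^ k‖ ≤ C * ((2 * r ^ 2 - 1) / (r ^ 2 - 1)) := by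
  have hz' := mem_closedAnnulus_of_norm_eq_inv hr.le hz
  rw [eq_sub_of_add_eq' (tsum_regularPart_add_tsum_principalPart (hs z hz'))]
  refine (norm_sub_le _ _).trans ((add_le_add (hb z hz')
    (norm_tsum_regularPart_le_of_norm_eq_inv hr hs hb hz)).trans_eq ?_)
  have : r ^ 2 - 1 ≠ 0 := by nlinarith
  field_simp; ring

end OneVariable

/-- Truncating the coefficients with `Set.indicator` keeps each corner of a double Laurent series
a double Laurent series over `ℤ × ℤ`. -/
noncomputable def laurentSum₂ (A : ℤ × ℤ → ℂ) (z₁ z₂ : ℂ) : ℂ :=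
  ∑' p : ℤ × ℤ, A p * z₁ ^ p.1 * z₂ ^ p.2

section TwoVariables

variable {A : ℤ × ℤ → ℂ} {z₁ z₂ : ℂ}

theorem laurentSum₂_swap : laurentSum₂ A z₁ z₂ = laurentSum₂ (A ∘ Prod.swap) z₂ z₁ := by
  rw [laurentSum₂, laurentSum₂, ← (Equiv.prodComm ℤ ℤ).tsum_eq]
  exact tsum_congr fun p => mul_right_comm _ _ _

theorem summable_laurentSum₂_swap_iff :
    (Summable fun p : ℤ × ℤ => ‖A p * z₁ ^ p.1 * z₂ ^ p.2‖) ↔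
      Summable fun p : ℤ × ℤ => ‖(A ∘ Prod.swap) p * z₂ ^ p.1 * z₁ ^ p.2‖ := by
  rw [← (Equiv.prodComm ℤ ℤ).summable_iff]
  simp [Function.comp_def, mul_right_comm]

theorem Summable.laurentSum₂_indicator (s : Set (ℤ × ℤ))
    (h : Summable fun p : ℤ × ℤ => ‖A p * z₁ ^ p.1 * z₂ ^ p.2‖) :
    Summable fun p : ℤ × ℤ => ‖s.indicator A p * z₁ ^ p.1 * z₂ ^ p.2‖ :=
  .of_nonneg_of_le (fun _ => norm_nonneg _) (fun p => by
    simp only [norm_mul]; gcongr; exact norm_indicator_le_norm_self A p) h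

theorem laurentSum₂_eq_tsum_snd (h : Summable fun p : ℤ × ℤ => ‖A p * z₁ ^ p.1 * z₂ ^ p.2‖) :
    laurentSum₂ A z₁ z₂ = ∑' m, (∑' n, A (n, m) * z₁ ^ n) * z₂ ^ m := by
  rw [laurentSum₂_swap, laurentSum₂, (summable_laurentSum₂_swap_iff.1 h).of_norm.tsum_prod]
  exact tsum_congr fun m => by rw [← tsum_mul_right]; exact tsum_congr fun n => mul_right_comm _ _ _

theorem summable_norm_tsum_snd (h : Summable fun p : ℤ × ℤ => ‖A p * z₁ ^ p.1 * z₂ ^ p.2‖) :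
    Summable fun m => ‖(∑' n, A (n, m) * z₁ ^ n) * z₂ ^ m‖ := by
  have h' := summable_laurentSum₂_swap_iff.1 h
  refine .of_nonneg_of_le (fun _ => norm_nonneg _) (fun m => ?_) h'.prod
  rw [← tsum_mul_right]
  refine (norm_tsum_le_tsum_norm ?_).trans_eq (tsum_congr fun n => ?_)
  · exact (h'.prod_factor m).congr fun n => by simp [mul_right_comm]
  · simp [mul_right_comm]

theorem laurentSum₂_indicator_univ_prod (s : Set ℤ)
    (h : Summable fun p : ℤ × ℤ => ‖A p * z₁ ^ p.1 * z₂ ^ p.2‖) :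
    laurentSum₂ ((univ ×ˢ s).indicator A) z₁ z₂ =
      ∑' m, s.indicator (fun m => ∑' n, A (n, m) * z₁ ^ n) m * z₂ ^ m := by
  rw [laurentSum₂_eq_tsum_snd (h.laurentSum₂_indicator _)]
  refine tsum_congr fun m => ?_
  by_cases hm : m ∈ s <;> simp [hm, indicator_of_mem, indicator_of_notMem]

theorem laurentSum₂_indicator_range_prod {i j : ℕ → ℤ} (hi : Injective i) (hj : Injective j) :
    laurentSum₂ ((range i ×ˢ range j).indicator A) z₁ z₂ =
      ∑' p : ℕ × ℕ, A (i p.1, j p.2) * z₁ ^ i p.1 * z₂ ^ j p.2 := by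
  have h := tsum_indicator_range (hi.prodMap hj) fun p : ℤ × ℤ => A p * z₁ ^ p.1 * z₂ ^ p.2
  rw [range_prodMap] at h
  refine (tsum_congr fun p => ?_).trans h
  by_cases hp : p ∈ range i ×ˢ range j
  · simp only [indicator_of_mem hp]
  · simp only [indicator_of_notMem hp, zero_mul]

theorem bddAbove_norm_laurentSum₂ {r : ℝ} (hr : 1 ≤ r)
    (hs : ∀ z₁ ∈ closedAnnulus r, ∀ z₂ ∈ closedAnnulus r,
      Summable fun p : ℤ × ℤ => ‖A p * z₁ ^ p.1 * z₂ ^ p.2‖) :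
    BddAbove
      ((fun z : ℂ × ℂ => ‖laurentSum₂ A z.1 z.2‖) '' (closedAnnulus r ×ˢ closedAnnulus r)) := by
  have hr₀ : 0 < r := by linarith
  set R : ℂ := (r : ℂ)
  set R' : ℂ := ((1 / r : ℝ) : ℂ)
  have hR : ‖R‖ = r := by simp [R, abs_of_pos hr₀]
  have hR' : ‖R'‖ = 1 / r := by simp [R', abs_of_pos hr₀]
  have hRA := mem_closedAnnulus_of_norm_eq hr hR
  have hR'A := mem_closedAnnulus_of_norm_eq_inv hr hR'
  have hpow (z : ℂ) (hz : z ∈ closedAnnulus r) (n : ℤ) : ‖z‖ ^ n ≤ r ^ n + (1 / r) ^ n :=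
    zpow_le_zpow_add_one_div_zpow ((one_div_pos.2 hr₀).trans_le hz.1) hz.1 hz.2 n
  -- every term is dominated by the sum of its values at the four points with `|zᵢ| ∈ {r, 1/r}`
  have hterm : ∀ z ∈ closedAnnulus r ×ˢ closedAnnulus r, ∀ p : ℤ × ℤ,
      ‖A p * z.1 ^ p.1 * z.2 ^ p.2‖ ≤ ‖A p * R ^ p.1 * R ^ p.2‖ + ‖A p * R ^ p.1 * R' ^ p.2‖ +
        ‖A p * R' ^ p.1 * R ^ p.2‖ + ‖A p * R' ^ p.1 * R' ^ p.2‖ := fun z hz p => by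
    simp only [norm_mul, norm_zpow, hR, hR']
    calc ‖A p‖ * ‖z.1‖ ^ p.1 * ‖z.2‖ ^ p.2
        ≤ ‖A p‖ * (r ^ p.1 + (1 / r) ^ p.1) * (r ^ p.2 + (1 / r) ^ p.2) := by
          gcongr
          exacts [hpow z.1 hz.1 p.1, hpow z.2 hz.2 p.2]
      _ = _ := by ring
  refine ⟨_, forall_mem_image.2 fun z hz => (norm_tsum_le_tsum_norm (hs z.1 hz.1 z.2 hz.2)).trans
    (Summable.tsum_le_tsum (hterm z hz) (hs z.1 hz.1 z.2 hz.2)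
      ((((hs R hRA R hRA).add (hs R hRA R' hR'A)).add (hs R' hR'A R hRA)).add
        (hs R' hR'A R' hR'A)))⟩

section Steps

variable {r C : ℝ} (hr : 1 < r)
include hr

theorem norm_laurentSum₂_regular_snd_le
    (hs : ∀ z ∈ closedAnnulus r, Summable fun p : ℤ × ℤ => ‖A p * z₁ ^ p.1 * z ^ p.2‖)
    (hb : ∀ z ∈ closedAnnulus r, ‖laurentSum₂ A z₁ z‖ ≤ C) (hz₂ : ‖z₂‖ = r) :
    ‖laurentSum₂ ((univ ×ˢ Ici 0).indicator A) z₁ z₂‖ ≤ C * (r ^ 2 / (r ^ 2 - 1)) := by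
  rw [laurentSum₂_indicator_univ_prod _ (hs z₂ (mem_closedAnnulus_of_norm_eq hr.le hz₂))]
  refine norm_tsum_regularPart_le_of_norm_eq hr (fun z hz => summable_norm_tsum_snd (hs z hz))
    (fun z hz => ?_) hz₂
  rw [← laurentSum₂_eq_tsum_snd (hs z hz)]; exact hb z hz

theorem norm_laurentSum₂_principal_snd_le
    (hs : ∀ z ∈ closedAnnulus r, Summable fun p : ℤ × ℤ => ‖A p * z₁ ^ p.1 * z ^ p.2‖)
    (hb : ∀ z ∈ closedAnnulus r, ‖laurentSum₂ A z₁ z‖ ≤ C) (hz₂ : ‖z₂‖ = 1 / r) :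
    ‖laurentSum₂ ((univ ×ˢ Iio 0).indicator A) z₁ z₂‖ ≤
      C * ((2 * r ^ 2 - 1) / (r ^ 2 - 1)) := by
  rw [laurentSum₂_indicator_univ_prod _ (hs z₂ (mem_closedAnnulus_of_norm_eq_inv hr.le hz₂))]
  refine norm_tsum_principalPart_le_of_norm_eq_inv hr
    (fun z hz => summable_norm_tsum_snd (hs z hz)) (fun z hz => ?_) hz₂
  rw [← laurentSum₂_eq_tsum_snd (hs z hz)]; exact hb z hz

theorem norm_laurentSum₂_regular_fst_le
    (hs : ∀ z ∈ closedAnnulus r, Summable fun p : ℤ × ℤ => ‖A p * z ^ p.1 * z₂ ^ p.2‖)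
    (hb : ∀ z ∈ closedAnnulus r, ‖laurentSum₂ A z z₂‖ ≤ C) (hz₁ : ‖z₁‖ = r) :
    ‖laurentSum₂ ((Ici 0 ×ˢ univ).indicator A) z₁ z₂‖ ≤ C * (r ^ 2 / (r ^ 2 - 1)) := by
  rw [laurentSum₂_swap, indicator_prod_comp_swap]
  exact norm_laurentSum₂_regular_snd_le hr (fun z hz => summable_laurentSum₂_swap_iff.1 (hs z hz))
    (fun z hz => by rw [← laurentSum₂_swap]; exact hb z hz) hz₁

theorem norm_laurentSum₂_principal_fst_le
    (hs : ∀ z ∈ closedAnnulus r, Summable fun p : ℤ × ℤ => ‖A p * z ^ p.1 * z₂ ^ p.2‖)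
    (hb : ∀ z ∈ closedAnnulus r, ‖laurentSum₂ A z z₂‖ ≤ C) (hz₁ : ‖z₁‖ = 1 / r) :
    ‖laurentSum₂ ((Iio 0 ×ˢ univ).indicator A) z₁ z₂‖ ≤
      C * ((2 * r ^ 2 - 1) / (r ^ 2 - 1)) := by
  rw [laurentSum₂_swap, indicator_prod_comp_swap]
  exact norm_laurentSum₂_principal_snd_le hr (fun z hz => summable_laurentSum₂_swap_iff.1 (hs z hz))
    (fun z hz => by rw [← laurentSum₂_swap]; exact hb z hz) hz₁

end Steps

end TwoVariables

theorem norm_laurentSum₂_quadrants_le {r M : ℝ} (hr : 1 < r) {A : ℤ × ℤ → ℂ}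
    (hs : ∀ z₁ ∈ closedAnnulus r, ∀ z₂ ∈ closedAnnulus r,
      Summable fun p : ℤ × ℤ => ‖A p * z₁ ^ p.1 * z₂ ^ p.2‖)
    (hM : ∀ z₁ ∈ closedAnnulus r, ∀ z₂ ∈ closedAnnulus r, ‖laurentSum₂ A z₁ z₂‖ ≤ M)
    {ξ₁ ξ₂ : ℂ} (hξ₁ : ‖ξ₁‖ = r) (hξ₂ : ‖ξ₂‖ = r) :
    ‖laurentSum₂ ((Ici 0 ×ˢ Ici 0).indicator A) ξ₁ ξ₂‖ ≤ (r ^ 2 / (r ^ 2 - 1)) ^ 2 * M ∧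
    ‖laurentSum₂ ((Ici 0 ×ˢ Iio 0).indicator A) ξ₁ ξ₂⁻¹‖ ≤
      r ^ 2 / (r ^ 2 - 1) * ((2 * r ^ 2 - 1) / (r ^ 2 - 1)) * M ∧
    ‖laurentSum₂ ((Iio 0 ×ˢ Ici 0).indicator A) ξ₁⁻¹ ξ₂‖ ≤
      r ^ 2 / (r ^ 2 - 1) * ((2 * r ^ 2 - 1) / (r ^ 2 - 1)) * M ∧
    ‖laurentSum₂ ((Iio 0 ×ˢ Iio 0).indicator A) ξ₁⁻¹ ξ₂⁻¹‖ ≤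
      ((2 * r ^ 2 - 1) / (r ^ 2 - 1)) ^ 2 * M := by
  have hinv {ξ : ℂ} (hξ : ‖ξ‖ = r) : ‖ξ⁻¹‖ = 1 / r := by rw [norm_inv, hξ, one_div]
  have hξ₁A := mem_closedAnnulus_of_norm_eq hr.le hξ₁
  have hξ₁A' := mem_closedAnnulus_of_norm_eq_inv hr.le (hinv hξ₁)
  have hquad (s t : Set ℤ) : (univ ×ˢ t).indicator ((s ×ˢ univ).indicator A) =
      (s ×ˢ t).indicator A := by
    rw [indicator_indicator, prod_inter_prod, univ_inter, inter_univ]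
  have hreg z₂ (hz₂ : z₂ ∈ closedAnnulus r) :=
    norm_laurentSum₂_regular_fst_le hr (hs · · z₂ hz₂) (hM · · z₂ hz₂) hξ₁
  have hprin z₂ (hz₂ : z₂ ∈ closedAnnulus r) :=
    norm_laurentSum₂_principal_fst_le hr (hs · · z₂ hz₂) (hM · · z₂ hz₂) (hinv hξ₁)
  have hsreg z₂ (hz₂ : z₂ ∈ closedAnnulus r) :=
    (hs ξ₁ hξ₁A z₂ hz₂).laurentSum₂_indicator (Ici 0 ×ˢ univ)
  have hsprin z₂ (hz₂ : z₂ ∈ closedAnnulus r) :=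
    (hs ξ₁⁻¹ hξ₁A' z₂ hz₂).laurentSum₂_indicator (Iio 0 ×ˢ univ)
  refine ⟨?_, ?_, ?_, ?_⟩ <;> rw [← hquad]
  · exact (norm_laurentSum₂_regular_snd_le hr hsreg hreg hξ₂).trans_eq (by ring)
  · exact (norm_laurentSum₂_principal_snd_le hr hsreg hreg (hinv hξ₂)).trans_eq (by ring)
  · exact (norm_laurentSum₂_regular_snd_le hr hsprin hprin hξ₂).trans_eq (by ring)
  · exact (norm_laurentSum₂_principal_snd_le hr hsprin hprin (hinv hξ₂)).trans_eq (by ring)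

/-- Let `r > 1` and let `g(z₁,z₂) = Σ_{n,m∈ℤ} a_{n,m} z₁ⁿ z₂ᵐ` be an
absolutely convergent double Laurent series on the closed biannulus `Ā_r²`.  With
`g₁, g₂, g₃, g₄` the four "corner" parts of the series and `‖g‖ = sup_{Ā_r²}|g|`, for all
points of the torus `{|ξ₁| = |ξ₂| = r}`:
`|g₁| ≤ (r²/(r²−1))²·‖g‖`, `|g₂| ≤ (r²/(r²−1))((2r²−1)/(r²−1))·‖g‖`,
`|g₃| ≤ (r²/(r²−1))((2r²−1)/(r²−1))·‖g‖`, and `|g₄| ≤ ((2r²−1)/(r²−1))²·‖g‖`. -/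
theorem biannulus_laurent_split_bounds
    (r : ℝ) (hr : 1 < r) (a : ℤ → ℤ → ℂ)
    (hsum : ∀ z₁ z₂ : ℂ, 1 / r ≤ ‖z₁‖ → ‖z₁‖ ≤ r → 1 / r ≤ ‖z₂‖ → ‖z₂‖ ≤ r →
      Summable fun nm : ℤ × ℤ => ‖a nm.1 nm.2 * z₁ ^ nm.1 * z₂ ^ nm.2‖) :
    ∀ ξ₁ ξ₂ : ℂ, ‖ξ₁‖ = r → ‖ξ₂‖ = r →
      ‖∑' nm : ℕ × ℕ, a (nm.1 : ℤ) (nm.2 : ℤ) * ξ₁ ^ nm.1 * ξ₂ ^ nm.2‖ ≤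
        (r ^ 2 / (r ^ 2 - 1)) ^ 2 * sSup ((fun zw : ℂ × ℂ => ‖∑' nm : ℤ × ℤ, a nm.1 nm.2 * zw.1 ^ nm.1 * zw.2 ^ nm.2‖) '' ({z : ℂ | 1 / r ≤ ‖z‖ ∧ ‖z‖ ≤ r} ×ˢ {z : ℂ | 1 / r ≤ ‖z‖ ∧ ‖z‖ ≤ r})) ∧
      ‖∑' nm : ℕ × ℕ, a (nm.1 : ℤ) (-((nm.2 : ℤ) + 1)) * ξ₁ ^ nm.1 * ξ₂ ^ (nm.2 + 1)‖ ≤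
        (r ^ 2 / (r ^ 2 - 1)) * ((2 * r ^ 2 - 1) / (r ^ 2 - 1)) * sSup ((fun zw : ℂ × ℂ => ‖∑' nm : ℤ × ℤ, a nm.1 nm.2 * zw.1 ^ nm.1 * zw.2 ^ nm.2‖) '' ({z : ℂ | 1 / r ≤ ‖z‖ ∧ ‖z‖ ≤ r} ×ˢ {z : ℂ | 1 / r ≤ ‖z‖ ∧ ‖z‖ ≤ r})) ∧
      ‖∑' nm : ℕ × ℕ, a (-((nm.1 : ℤ) + 1)) (nm.2 : ℤ) * ξ₁ ^ (nm.1 + 1) * ξ₂ ^ nm.2‖ ≤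
        (r ^ 2 / (r ^ 2 - 1)) * ((2 * r ^ 2 - 1) / (r ^ 2 - 1)) * sSup ((fun zw : ℂ × ℂ => ‖∑' nm : ℤ × ℤ, a nm.1 nm.2 * zw.1 ^ nm.1 * zw.2 ^ nm.2‖) '' ({z : ℂ | 1 / r ≤ ‖z‖ ∧ ‖z‖ ≤ r} ×ˢ {z : ℂ | 1 / r ≤ ‖z‖ ∧ ‖z‖ ≤ r})) ∧
      ‖∑' nm : ℕ × ℕ, a (-((nm.1 : ℤ) + 1)) (-((nm.2 : ℤ) + 1)) * ξ₁ ^ (nm.1 + 1) * ξ₂ ^ (nm.2 + 1)‖ ≤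
        ((2 * r ^ 2 - 1) / (r ^ 2 - 1)) ^ 2 * sSup ((fun zw : ℂ × ℂ => ‖∑' nm : ℤ × ℤ, a nm.1 nm.2 * zw.1 ^ nm.1 * zw.2 ^ nm.2‖) '' ({z : ℂ | 1 / r ≤ ‖z‖ ∧ ‖z‖ ≤ r} ×ˢ {z : ℂ | 1 / r ≤ ‖z‖ ∧ ‖z‖ ≤ r})) := by
  intro ξ₁ ξ₂ hξ₁ hξ₂
  have hs : ∀ z₁ ∈ closedAnnulus r, ∀ z₂ ∈ closedAnnulus r,
      Summable fun p : ℤ × ℤ => ‖uncurry a p * z₁ ^ p.1 * z₂ ^ p.2‖ :=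
    fun z₁ h₁ z₂ h₂ => hsum z₁ z₂ h₁.1 h₁.2 h₂.1 h₂.2
  obtain ⟨h₁, h₂, h₃, h₄⟩ := norm_laurentSum₂_quadrants_le hr hs
    (fun z₁ h₁ z₂ h₂ => le_csSup (bddAbove_norm_laurentSum₂ hr.le hs) ⟨(z₁, z₂), ⟨h₁, h₂⟩, rfl⟩)
    hξ₁ hξ₂
  simp only [← Nat.range_cast_int, ← range_neg_natCast_add_one,
    laurentSum₂_indicator_range_prod, Nat.cast_injective, injective_neg_natCast_add_one,
    uncurry_apply_pair, zpow_natCast, inv_zpow_neg_natCast_add_one] at h₁ h₂ h₃ h₄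
  exact ⟨h₁, h₂, h₃, h₄⟩
end
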